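/- arXiv:2501.07364 — 4 statements merged into one kernel-verified Lean document; each statement's English description precedes it below -/
import Mathlib

section
/- For all integers n ≥ 1 and 0 ≤ k ≤ n, the binomial sum identity ∑_{j=0}^{k} C(n,j) t^j = ∑_{i=0}^{k} C(n-k+i-1, i) t^i (1+t)^{k-i} holds as polynomials in t. -/
/-!
Write `n = m + k` and view both sides as functions of `k` with `m` fixed. Both satisfy
`f (k + 1) = (1 + t) f k + C(m + k, k + 1) t ^ (k + 1)` with `f 0 = 1`: the right-hand side by
splitting off its last term, the left-hand side by Pascal's rule.
-/

open Polynomial Finset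

section
variable {R : Type*} [CommSemiring R]

theorem sum_range_choose_succ_mul_pow (x : R) (n k : ℕ) :
    ∑ j ∈ range (k + 2), ((n + 1).choose j : R) * x ^ j =
      (1 + x) * ∑ j ∈ range (k + 1), (n.choose j : R) * x ^ j +
        (n.choose (k + 1) : R) * x ^ (k + 1) := by
  have pascal : ∑ j ∈ range (k + 1), ((n + 1).choose (j + 1) : R) * x ^ (j + 1) =
      x * ∑ j ∈ range (k + 1), (n.choose j : R) * x ^ j +
        ∑ j ∈ range (k + 1), (n.choose (j + 1) : R) * x ^ (j + 1) := by
    rw [mul_sum, ← sum_add_distrib]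
    refine sum_congr rfl fun j _ => ?_
    rw [Nat.choose_succ_succ, Nat.cast_add]
    ring
  calc ∑ j ∈ range (k + 2), ((n + 1).choose j : R) * x ^ j
      = ∑ j ∈ range (k + 1), ((n + 1).choose (j + 1) : R) * x ^ (j + 1) + 1 := by
        simp [sum_range_succ' _ (k + 1)]
    _ = x * ∑ j ∈ range (k + 1), (n.choose j : R) * x ^ j +
          ∑ j ∈ range (k + 2), (n.choose j : R) * x ^ j := by
        simp [pascal, sum_range_succ' _ (k + 1), add_assoc]
    _ = _ := by rw [sum_range_succ _ (k + 1)]; ring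

/-- The truncated `m + i - 1` only matters at `m = i = 0`, where `C(0, 0) = C(-1, 0) = 1`. -/
theorem sum_range_choose_add_mul_pow (x : R) (m k : ℕ) :
    ∑ j ∈ range (k + 1), ((m + k).choose j : R) * x ^ j =
      ∑ i ∈ range (k + 1), ((m + i - 1).choose i : R) * x ^ i * (1 + x) ^ (k - i) := by
  induction k with
  | zero => simp
  | succ k ih =>
    rw [← add_assoc, sum_range_choose_succ_mul_pow, ih, sum_range_succ _ (k + 1), mul_sum]
    congr 1
    · refine sum_congr rfl fun i hi => ?_
      rw [Nat.sub_add_comm (Nat.lt_succ_iff.mp (mem_range.mp hi)), pow_succ]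
      ring
    · simp [← add_assoc]
end

theorem binomial_sum_identity_general (n k : ℕ) (hk : k ≤ n) :
    ∑ j ∈ Finset.range (k + 1), C ((n.choose j : ℝ)) * X ^ j =
      ∑ i ∈ Finset.range (k + 1),
        C (((n - k + i - 1).choose i : ℝ)) * X ^ i * (1 + X) ^ (k - i) := by
  obtain ⟨m, rfl⟩ := Nat.exists_eq_add_of_le' hk
  simp only [map_natCast, Nat.add_sub_cancel]
  exact sum_range_choose_add_mul_pow X m k

/-- For `n ≥ 1` and `0 ≤ k ≤ n`,
`∑_{j=0}^{k} C(n,j) t^j = ∑_{i=0}^{k} C(n-k+i-1, i) t^i (1+t)^{k-i}` in `ℝ[t]`. -/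
theorem binomial_sum_identity (n k : ℕ) (hn : 1 ≤ n) (hk : k ≤ n) :
    ∑ j ∈ Finset.range (k + 1), C ((n.choose j : ℝ)) * X ^ j =
      ∑ i ∈ Finset.range (k + 1),
        C (((n - k + i - 1).choose i : ℝ)) * X ^ i * (1 + X) ^ (k - i) :=
  binomial_sum_identity_general n k hk
end

section
/- If f and g are real-rooted polynomials with positive leading coefficients such that the zeros of f interlace the zeros of g, then for all real numbers a, b the polynomial a·f + b·g is real-rooted (or zero). -/
open Polynomial

attribute [local instance] Classical.propDecidable

/-- A real polynomial is real-rooted if it is nonzero and all of its complex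
zeros are real, i.e. the number of real roots (with multiplicity) equals the degree. -/
def RealRooted (f : Polynomial ℝ) : Prop :=
  f ≠ 0 ∧ f.roots.card = f.natDegree

/-- The list of real roots of `f`, with multiplicity, in decreasing order. -/
noncomputable def sortedRootsDesc (f : Polynomial ℝ) : List ℝ :=
  (f.roots.sort (· ≤ ·)).reverse

/-- `Interlaces f g` means: `f` and `g` are real-rooted with positive leading
coefficients, `deg g` is `deg f` or `deg f + 1`, and listing the zeros
`α₁ ≥ α₂ ≥ ⋯` of `f` and `β₁ ≥ β₂ ≥ ⋯` of `g`, one has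
`⋯ ≤ α₂ ≤ β₂ ≤ α₁ ≤ β₁`. -/
def Interlaces (f g : Polynomial ℝ) : Prop :=
  RealRooted f ∧ RealRooted g ∧ 0 < f.leadingCoeff ∧ 0 < g.leadingCoeff ∧
  (g.natDegree = f.natDegree ∨ g.natDegree = f.natDegree + 1) ∧
  (∀ i (hf : i < (sortedRootsDesc f).length) (hg : i < (sortedRootsDesc g).length),
     (sortedRootsDesc f).get ⟨i, hf⟩ ≤ (sortedRootsDesc g).get ⟨i, hg⟩) ∧
  (∀ i (hf : i < (sortedRootsDesc f).length) (hg : i + 1 < (sortedRootsDesc g).length),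
     (sortedRootsDesc g).get ⟨i + 1, hg⟩ ≤ (sortedRootsDesc f).get ⟨i, hf⟩)

lemma srd_coe (f : Polynomial ℝ) : (↑(sortedRootsDesc f) : Multiset ℝ) = f.roots := by
  unfold sortedRootsDesc
  rw [Multiset.coe_reverse, Multiset.sort_eq]

lemma srd_sorted (f : Polynomial ℝ) : (sortedRootsDesc f).Pairwise (· ≥ ·) := by
  unfold sortedRootsDesc
  have := Multiset.pairwise_sort f.roots (· ≤ ·)
  rw [List.pairwise_reverse]
  exact this

lemma srd_unique {f : Polynomial ℝ} {l : List ℝ} (hs : l.Pairwise (· ≥ ·))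
    (hc : (↑l : Multiset ℝ) = f.roots) : l = sortedRootsDesc f := by
  apply List.Perm.eq_of_pairwise' hs (srd_sorted f)
  rw [← Multiset.coe_eq_coe, hc, srd_coe]

lemma srd_length {f : Polynomial ℝ} (hf : RealRooted f) :
    (sortedRootsDesc f).length = f.natDegree := by
  have : ((sortedRootsDesc f : Multiset ℝ)).card = f.roots.card := by rw [srd_coe]
  simpa [hf.2] using this

lemma srd_anti {f : Polynomial ℝ} {i j : ℕ} (hij : i ≤ j) (hj : j < (sortedRootsDesc f).length) :
    (sortedRootsDesc f)[j] ≤ (sortedRootsDesc f)[i]'(lt_of_le_of_lt hij hj) := by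
  rcases eq_or_lt_of_le hij with rfl | h
  · exact le_refl _
  · exact (List.pairwise_iff_getElem.mp (srd_sorted f)) i j _ hj h

lemma srd_mem {f : Polynomial ℝ} {r : ℝ} : r ∈ sortedRootsDesc f ↔ r ∈ f.roots := by
  rw [← srd_coe f]; simp

lemma rr_splits {f : Polynomial ℝ} (hf : RealRooted f) : f.Splits :=
  splits_iff_card_roots.mpr hf.2

lemma aeval_ne_zero_of_im {f : Polynomial ℝ} (hf0 : f ≠ 0) (hs : f.Splits)
    {z : ℂ} (hz : z.im ≠ 0) : aeval z f ≠ 0 := by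
  conv_lhs => rw [hs.eq_prod_roots]
  rw [map_mul, map_multiset_prod]
  apply mul_ne_zero
  · simp only [aeval_C]
    simpa using leadingCoeff_ne_zero.mpr hf0
  · apply Multiset.prod_ne_zero
    intro h
    rw [Multiset.mem_map] at h
    obtain ⟨q, hqm, hq⟩ := h
    rw [Multiset.mem_map] at hqm
    obtain ⟨r, _, rfl⟩ := hqm
    
    apply hz
    have : (aeval z (X - C r)).im = 0 := by rw [hq]; rfl
    simpa using this

lemma splits_of_roots_real : ∀ n (h : Polynomial ℝ), h.natDegree = n → h ≠ 0 →
    (∀ z : ℂ, aeval z h = 0 → z.im = 0) → h.Splits := by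
  intro n
  induction n using Nat.strong_induction_on with
  | _ n IH =>
    intro h hdeg h0 hroots
    rcases Nat.eq_zero_or_pos n with rfl | hn
    · exact Splits.of_natDegree_le_one (by omega)
    · have hd : (h.map (algebraMap ℝ ℂ)).degree ≠ 0 ∧ 0 < (h.map (algebraMap ℝ ℂ)).degree := by
        rw [degree_map, degree_eq_natDegree h0, hdeg]
        constructor
        · simp; omega
        · exact_mod_cast hn
      obtain ⟨z, hz⟩ := Complex.exists_root hd.2
      have hz' : aeval z h = 0 := by rwa [aeval_def, ← eval_map]
      have him := hroots z hz'
      have hzr : z = ((z.re : ℝ) : ℂ) := by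
        apply Complex.ext <;> simp [him]
      have hr : IsRoot h z.re := by
        have : aeval ((z.re : ℝ) : ℂ) h = 0 := by rw [← hzr]; exact hz'
        rw [show ((z.re : ℝ) : ℂ) = algebraMap ℝ ℂ z.re from rfl,
          aeval_algebraMap_apply] at this
        exact_mod_cast Complex.ofReal_eq_zero.mp this
      obtain ⟨q, hq⟩ := (dvd_iff_isRoot.mpr hr)
      have hq0 : q ≠ 0 := by rintro rfl; simp at hq; exact h0 hq
      have hXC : (X - C z.re) ≠ (0 : Polynomial ℝ) := X_sub_C_ne_zero z.re
      have hdq : q.natDegree = n - 1 := by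
        have := natDegree_mul hXC hq0
        rw [← hq, hdeg, natDegree_X_sub_C] at this
        omega
      have hsq : q.Splits := by
        apply IH (n-1) (by omega) q hdq hq0
        intro w hw
        apply hroots
        rw [hq, map_mul, hw, mul_zero]
      rw [hq]
      exact (Splits.X_sub_C _).mul hsq

lemma realRooted_of_roots_real {h : Polynomial ℝ} (h0 : h ≠ 0)
    (hroots : ∀ z : ℂ, aeval z h = 0 → z.im = 0) : RealRooted h :=
  ⟨h0, splits_iff_card_roots.mp (splits_of_roots_real h.natDegree h rfl h0 hroots)⟩

lemma list_anti {A : List ℝ} (hA : A.Pairwise (· ≥ ·)) {i j : ℕ} (hij : i ≤ j)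
    (hj : j < A.length) : A[j] ≤ A[i]'(lt_of_le_of_lt hij hj) := by
  rcases eq_or_lt_of_le hij with rfl | h
  · exact le_refl _
  · exact (List.pairwise_iff_getElem.mp hA) i j _ hj h

lemma indexOf_le_of_getElem {A : List ℝ} {a : ℝ} : ∀ {j : ℕ} (h : j < A.length),
    A[j] = a → A.idxOf a ≤ j := by
  induction A with
  | nil => intro j h; simp at h
  | cons b t IH =>
    intro j h ha
    by_cases hb : b = a
    · rw [List.idxOf_cons_eq _ hb]; omega
    · have hj : j ≠ 0 := by rintro rfl; exact hb ha
      obtain ⟨j', rfl⟩ := Nat.exists_eq_succ_of_ne_zero hj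
      rw [List.idxOf_cons_ne _ hb]
      have hjt : j' < t.length := by simpa using h
      have : t[j'] = a := by simpa using ha
      exact Nat.succ_le_succ (IH hjt this)

/-- The interlacing inequalities are preserved by erasing a common value. -/
lemma interlace_erase {A B : List ℝ} (hA : A.Pairwise (· ≥ ·)) (hB : B.Pairwise (· ≥ ·))
    {r : ℝ} (hrA : r ∈ A) (hrB : r ∈ B)
    (h1 : ∀ i (hf : i < A.length) (hg : i < B.length), A[i] ≤ B[i])
    (h2 : ∀ i (hf : i < A.length) (hg : i + 1 < B.length), B[i+1] ≤ A[i]) :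
    (∀ i (hf : i < (A.erase r).length) (hg : i < (B.erase r).length),
       (A.erase r)[i] ≤ (B.erase r)[i]) ∧
    (∀ i (hf : i < (A.erase r).length) (hg : i + 1 < (B.erase r).length),
       (B.erase r)[i+1] ≤ (A.erase r)[i]) := by
  set p := A.idxOf r with hp
  set q := B.idxOf r with hq
  have hpl : p < A.length := List.idxOf_lt_length_iff.mpr hrA
  have hql : q < B.length := List.idxOf_lt_length_iff.mpr hrB
  have hAp : A[p] = r := List.getElem_idxOf hpl
  have hBq : B[q] = r := List.getElem_idxOf hql
  have hAe : A.erase r = A.eraseIdx p := (List.eraseIdx_idxOf_eq_erase r A).symm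
  have hBe : B.erase r = B.eraseIdx q := (List.eraseIdx_idxOf_eq_erase r B).symm
  have hAl : (A.erase r).length = A.length - 1 := by rw [List.length_erase_of_mem hrA]
  have hBl : (B.erase r).length = B.length - 1 := by rw [List.length_erase_of_mem hrB]
  -- values above/below r
  have hAlt : ∀ j (h : j < A.length), j < p → r < A[j] := by
    intro j h hjp
    rcases lt_or_ge r A[j] with h' | h'
    · exact h'
    · exfalso
      have : A[j] = r := le_antisymm h' (hAp ▸ list_anti hA (le_of_lt hjp) hpl)
      have := indexOf_le_of_getElem h this
      omega
  have hBlt : ∀ j (h : j < B.length), j < q → r < B[j] := by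
    intro j h hjq
    rcases lt_or_ge r B[j] with h' | h'
    · exact h'
    · exfalso
      have : B[j] = r := le_antisymm h' (hBq ▸ list_anti hB (le_of_lt hjq) hql)
      have := indexOf_le_of_getElem h this
      omega
  have hAge : ∀ j (h : j < A.length), p ≤ j → A[j] ≤ r := by
    intro j h hj; rw [← hAp]; exact list_anti hA hj h
  have hBge : ∀ j (h : j < B.length), q ≤ j → B[j] ≤ r := by
    intro j h hj; rw [← hBq]; exact list_anti hB hj h
  have hfe : ∀ i, i < A.length - 1 → i < (A.eraseIdx p).length := by
    intro i h; rw [List.length_eraseIdx_of_lt hpl]; omega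
  have hge : ∀ i, i < B.length - 1 → i < (B.eraseIdx q).length := by
    intro i h; rw [List.length_eraseIdx_of_lt hql]; omega
  constructor
  · intro i hf hg
    rw [hAl] at hf; rw [hBl] at hg
    simp only [hAe, hBe]
    by_cases hip : i < p <;> by_cases hiq : i < q
    · rw [List.getElem_eraseIdx_of_lt (l := A) (i := p) (j := i) (hfe i hf) hip,
        List.getElem_eraseIdx_of_lt (l := B) (i := q) (j := i) (hge i hg) hiq]
      exact h1 i (by omega) (by omega)
    · exfalso
      have h3 := hAlt i (by omega) hip
      have h4 := hBge i (by omega) (by omega)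
      have h5 := h1 i (by omega) (by omega)
      linarith
    · rw [List.getElem_eraseIdx_of_ge (l := A) (i := p) (j := i) (hfe i hf) (by omega),
        List.getElem_eraseIdx_of_lt (l := B) (i := q) (j := i) (hge i hg) hiq]
      have h3 := hAge (i+1) (by omega) (by omega)
      have h4 := hBlt i (by omega) hiq
      linarith
    · rw [List.getElem_eraseIdx_of_ge (l := A) (i := p) (j := i) (hfe i hf) (by omega),
        List.getElem_eraseIdx_of_ge (l := B) (i := q) (j := i) (hge i hg) (by omega)]
      exact h1 (i+1) (by omega) (by omega)
  · intro i hf hg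
    rw [hAl] at hf; rw [hBl] at hg
    simp only [hAe, hBe]
    by_cases hip : i < p <;> by_cases hiq : i + 1 < q
    · rw [List.getElem_eraseIdx_of_lt (l := A) (i := p) (j := i) (hfe i hf) hip,
        List.getElem_eraseIdx_of_lt (l := B) (i := q) (j := (i+1)) (hge (i+1) hg) hiq]
      exact h2 i (by omega) (by omega)
    · rw [List.getElem_eraseIdx_of_lt (l := A) (i := p) (j := i) (hfe i hf) hip,
        List.getElem_eraseIdx_of_ge (l := B) (i := q) (j := (i+1)) (hge (i+1) hg) (by omega)]
      have h3 : B[i+1+1] ≤ B[i+1] := list_anti hB (by omega) (by omega)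
      have h4 := h2 i (by omega) (by omega)
      linarith
    · exfalso
      have h3 := hBlt (i+1) (by omega) hiq
      have h4 := hAge i (by omega) (by omega)
      have h5 := h2 i (by omega) (by omega)
      linarith
    · rw [List.getElem_eraseIdx_of_ge (l := A) (i := p) (j := i) (hfe i hf) (by omega),
        List.getElem_eraseIdx_of_ge (l := B) (i := q) (j := (i+1)) (hge (i+1) hg) (by omega)]
      exact h2 (i+1) (by omega) (by omega)

/-- Product formula with sorted roots, over any `ℝ`-algebra. -/
lemma aeval_prod_form {f : Polynomial ℝ} (hf : RealRooted f) {S : Type*} [CommRing S]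
    [Algebra ℝ S] (z : S) :
    aeval z f = algebraMap ℝ S f.leadingCoeff *
      ∏ i ∈ Finset.range (sortedRootsDesc f).length,
        (z - algebraMap ℝ S ((sortedRootsDesc f).getD i 0)) := by
  conv_lhs => rw [(rr_splits hf).eq_prod_roots]
  rw [map_mul, aeval_C]
  congr 1
  rw [← srd_coe f, Multiset.map_coe, Multiset.prod_coe]
  set A := sortedRootsDesc f with hA
  have : A.map (fun a => X - C a) = List.ofFn (fun i : Fin A.length => X - C A[(i : ℕ)]) := by
    conv_lhs => rw [← List.ofFn_getElem (xs := A)]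
    rw [List.map_ofFn]
    rfl
  rw [this, map_list_prod, List.map_ofFn, List.prod_ofFn]
  have e : (∏ i : Fin A.length, ((aeval z) ∘ fun i : Fin A.length => X - C A[(i:ℕ)]) i)
      = ∏ i : Fin A.length, (z - algebraMap ℝ S (A.getD (i:ℕ) 0)) := by
    apply Finset.prod_congr rfl
    intro i _
    simp only [Function.comp_apply, map_sub, aeval_X, aeval_C,
      List.getD_eq_getElem A 0 i.isLt]
  rw [e]
  exact Fin.prod_univ_eq_prod_range (fun i => z - algebraMap ℝ S (A.getD i 0)) A.length

lemma eval_prod_form {f : Polynomial ℝ} (hf : RealRooted f) (x : ℝ) :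
    f.eval x = f.leadingCoeff *
      ∏ i ∈ Finset.range (sortedRootsDesc f).length, (x - (sortedRootsDesc f).getD i 0) :=
  aeval_prod_form hf x

lemma strict_case {f g : Polynomial ℝ} (hI : Interlaces f g)
    (hcr : ∀ r, r ∈ f.roots → r ∈ g.roots → False) (hn1 : 1 ≤ f.natDegree)
    {z : ℂ} (hz : z.im ≠ 0) {a b : ℝ} (ha : a ≠ 0) (hb : b ≠ 0) :
    aeval z (C a * f + C b * g) ≠ 0 := by
  obtain ⟨hfR, hgR, hlf, hlg, hdeg, hle, hge⟩ := hI
  have hf0 := hfR.1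
  have hg0 := hgR.1
  set A := sortedRootsDesc f with hA
  set B := sortedRootsDesc g with hB
  set n := f.natDegree with hn
  set m := g.natDegree with hm
  have lenA : A.length = n := srd_length hfR
  have lenB : B.length = m := srd_length hgR
  have hmn : m = n ∨ m = n + 1 := hdeg
  have hm1 : 1 ≤ m := by omega
  set u : ℕ → ℝ := fun i => A.getD i 0 with hu
  set v : ℕ → ℝ := fun i => B.getD i 0 with hv
  have hueq : ∀ i (h : i < n), u i = A[i]'(lenA ▸ h) := by
    intro i h; rw [hu]; exact List.getD_eq_getElem A 0 (lenA ▸ h)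
  have hveq : ∀ i (h : i < m), v i = B[i]'(lenB ▸ h) := by
    intro i h; rw [hv]; exact List.getD_eq_getElem B 0 (lenB ▸ h)
  have humem : ∀ i, i < n → u i ∈ f.roots := by
    intro i h; rw [hueq i h, ← srd_mem (f := f)]; exact List.getElem_mem _
  have hvmem : ∀ i, i < m → v i ∈ g.roots := by
    intro i h; rw [hveq i h, ← srd_mem (f := g)]; exact List.getElem_mem _
  have hle' : ∀ i, i < n → i < m → u i ≤ v i := by
    intro i h1 h2
    rw [hueq i h1, hveq i h2]
    exact hle i (lenA ▸ h1) (lenB ▸ h2)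
  have hge' : ∀ i, i < n → i + 1 < m → v (i+1) ≤ u i := by
    intro i h1 h2
    rw [hueq i h1, hveq (i+1) h2]
    exact hge i (lenA ▸ h1) (lenB ▸ h2)
  have uant : ∀ i j, i ≤ j → j < n → u j ≤ u i := by
    intro i j hij hj
    rw [hueq i (by omega), hueq j hj]
    exact list_anti (srd_sorted f) hij (lenA ▸ hj)
  have vant : ∀ i j, i ≤ j → j < m → v j ≤ v i := by
    intro i j hij hj
    rw [hveq i (by omega), hveq j hj]
    exact list_anti (srd_sorted g) hij (lenB ▸ hj)
  have sAB : ∀ i, i < n → i < m → u i < v i := by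
    intro i h1 h2
    rcases lt_or_eq_of_le (hle' i h1 h2) with h | h
    · exact h
    · exact absurd (h ▸ hvmem i h2) (fun hc => hcr _ (humem i h1) hc)
  have sBA : ∀ i, i < n → i + 1 < m → v (i+1) < u i := by
    intro i h1 h2
    rcases lt_or_eq_of_le (hge' i h1 h2) with h | h
    · exact h
    · exact absurd (h ▸ humem i h1) (fun hc => hcr _ hc (hvmem (i+1) h2))
  have vstrict : ∀ i j, i < j → j < m → v j < v i := by
    intro i j hij hj
    have h1 : i < n := by omega
    have h2 : v (i+1) < v i := lt_of_le_of_lt (le_of_lt (sBA i h1 (by omega))) (sAB i h1 (by omega))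
    exact lt_of_le_of_lt (vant (i+1) j (by omega) hj) h2
  have cross1 : ∀ j i, j < i → i < m → v i < u j := by
    intro j i hji hi
    exact lt_of_le_of_lt (vant (j+1) i (by omega) hi) (sBA j (by omega) (by omega))
  have cross2 : ∀ i j, i ≤ j → j < n → i < m → u j < v i := by
    intro i j hij hj hi
    exact lt_of_le_of_lt (uant i j hij hj) (sAB i (by omega) hi)
  -- sign lemma
  have sign : ∀ i, i < m → 0 < f.eval (v i) * ∏ j ∈ (Finset.range m).erase i, (v i - v j) := by
    intro i hi
    have hin : i ≤ n := by omega
    have hevf : f.eval (v i) = f.leadingCoeff * ∏ j ∈ Finset.range n, (v i - u j) := by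
      have := eval_prod_form hfR (v i)
      rw [← hA, lenA] at this
      exact this
    have hsplit : (∏ j ∈ Finset.range n, (v i - u j)) =
        (∏ j ∈ Finset.range i, (v i - u j)) * ∏ j ∈ Finset.Ico i n, (v i - u j) :=
      (Finset.prod_range_mul_prod_Ico _ hin).symm
    have herase : (Finset.range m).erase i = Finset.range i ∪ Finset.Ico (i+1) m := by
      ext j
      simp only [Finset.mem_erase, Finset.mem_range, Finset.mem_union, Finset.mem_Ico]
      omega
    have hdisj : Disjoint (Finset.range i) (Finset.Ico (i+1) m) := by
      rw [Finset.disjoint_left]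
      intro j hj hj'
      simp only [Finset.mem_range] at hj
      simp only [Finset.mem_Ico] at hj'
      omega
    have heprod : (∏ j ∈ (Finset.range m).erase i, (v i - v j)) =
        (∏ j ∈ Finset.range i, (v i - v j)) * ∏ j ∈ Finset.Ico (i+1) m, (v i - v j) := by
      rw [herase, Finset.prod_union hdisj]
    have e1 : (∏ j ∈ Finset.range i, (v i - u j)) =
        (-1 : ℝ)^i * ∏ j ∈ Finset.range i, (u j - v i) := by
      have hc : ∀ j ∈ Finset.range i, (v i - u j) = (-1) * (u j - v i) := by
        intro j _; ring
      rw [Finset.prod_congr rfl hc, Finset.prod_mul_distrib, Finset.prod_const,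
        Finset.card_range]
    have e3 : (∏ j ∈ Finset.range i, (v i - v j)) =
        (-1 : ℝ)^i * ∏ j ∈ Finset.range i, (v j - v i) := by
      have hc : ∀ j ∈ Finset.range i, (v i - v j) = (-1) * (v j - v i) := by
        intro j _; ring
      rw [Finset.prod_congr rfl hc, Finset.prod_mul_distrib, Finset.prod_const,
        Finset.card_range]
    have p1 : 0 < ∏ j ∈ Finset.range i, (u j - v i) := by
      apply Finset.prod_pos
      intro j hj
      rw [Finset.mem_range] at hj
      have := cross1 j i hj hi
      linarith
    have p2 : 0 < ∏ j ∈ Finset.Ico i n, (v i - u j) := by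
      apply Finset.prod_pos
      intro j hj
      rw [Finset.mem_Ico] at hj
      have := cross2 i j hj.1 hj.2 hi
      linarith
    have p3 : 0 < ∏ j ∈ Finset.range i, (v j - v i) := by
      apply Finset.prod_pos
      intro j hj
      rw [Finset.mem_range] at hj
      have := vstrict j i hj hi
      linarith
    have p4 : 0 < ∏ j ∈ Finset.Ico (i+1) m, (v i - v j) := by
      apply Finset.prod_pos
      intro j hj
      rw [Finset.mem_Ico] at hj
      have := vstrict i j (by omega) hj.2
      linarith
    set Q1 := ∏ j ∈ Finset.range i, (u j - v i) with hQ1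
    set Q2 := ∏ j ∈ Finset.Ico i n, (v i - u j) with hQ2
    set Q3 := ∏ j ∈ Finset.range i, (v j - v i) with hQ3
    set Q4 := ∏ j ∈ Finset.Ico (i+1) m, (v i - v j) with hQ4
    have hsq : ((-1 : ℝ)^i) * ((-1 : ℝ)^i) = 1 := by
      rw [← mul_pow]; norm_num
    have hgoal : f.eval (v i) * ∏ j ∈ (Finset.range m).erase i, (v i - v j)
        = ((-1:ℝ)^i * (-1:ℝ)^i) * (f.leadingCoeff * (Q1 * Q2 * (Q3 * Q4))) := by
      rw [hevf, hsplit, heprod, e1, e3]; ring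
    rw [hgoal, hsq, one_mul]
    exact mul_pos hlf (mul_pos (mul_pos p1 p2) (mul_pos p3 p4))
  -- helper: positivity through inverse
  have posinv : ∀ N P : ℝ, 0 < N * P → 0 < N * P⁻¹ := by
    intro N P hNP
    have hP : P ≠ 0 := by rintro rfl; simp at hNP
    have hid : N * P⁻¹ = (N * P) * (P⁻¹)^2 := by
      calc N * P⁻¹ = N * (P * P⁻¹) * P⁻¹ := by rw [mul_inv_cancel₀ hP]; ring
        _ = (N * P) * (P⁻¹)^2 := by ring
    rw [hid]
    exact mul_pos hNP (pow_two_pos_of_ne_zero (inv_ne_zero hP))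
  set lam : ℕ → ℝ := fun i => f.eval (v i) * (∏ j ∈ (Finset.range m).erase i, (v i - v j))⁻¹
    with hlam
  have hlampos : ∀ i, i < m → 0 < lam i := by
    intro i hi
    exact posinv _ _ (sign i hi)
  -- the degree bound for Lagrange interpolation
  set c : ℝ := if m = n then f.leadingCoeff / g.leadingCoeff else 0 with hc
  have hdegf : f.degree = (n : WithBot ℕ) := degree_eq_natDegree hf0
  have hdegg : g.degree = (m : WithBot ℕ) := degree_eq_natDegree hg0
  have hdeglt : (f - C c * g).degree < ((Finset.range m).card : WithBot ℕ) := by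
    rw [Finset.card_range]
    rcases hmn with hmn' | hmn'
    · have hcval : c = f.leadingCoeff / g.leadingCoeff := by rw [hc, if_pos hmn']
      have hcne : c ≠ 0 := by
        rw [hcval]
        exact div_ne_zero (ne_of_gt hlf) (ne_of_gt hlg)
      have hd1 : (C c * g).degree = f.degree := by
        rw [degree_C_mul hcne, hdegg, hdegf, hmn']
      have hd2 : (C c * g).leadingCoeff = f.leadingCoeff := by
        rw [leadingCoeff_mul, leadingCoeff_C, hcval,
          div_mul_cancel₀ _ (ne_of_gt hlg)]
      have := degree_sub_lt hd1.symm hf0 hd2.symm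
      rw [hdegf] at this
      rw [show ((n : ℕ) : WithBot ℕ) = ((m : ℕ) : WithBot ℕ) by rw [hmn']] at this
      exact this
    · have hcval : c = 0 := by rw [hc, if_neg (by omega)]
      rw [hcval, map_zero, zero_mul, sub_zero]
      calc f.degree = (n : WithBot ℕ) := hdegf
        _ < (m : WithBot ℕ) := by exact_mod_cast (by omega : n < m)
  have hinj : Set.InjOn v ↑(Finset.range m) := by
    intro i hi j hj hij
    simp only [Finset.coe_range, Set.mem_Iio] at hi hj
    rcases lt_trichotomy i j with h | h | h
    · exact absurd hij (ne_of_gt (vstrict i j h hj))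
    · exact h
    · exact absurd hij (ne_of_lt (vstrict j i h hi))
  have interp := Lagrange.eq_interpolate (s := Finset.range m) (v := v) hinj hdeglt
  -- complex quantities
  set D : ℕ → ℂ := fun j => z - algebraMap ℝ ℂ (v j) with hD
  have hDim : ∀ j, (D j).im = z.im := by
    intro j
    simp [hD, Complex.coe_algebraMap]
  have hDne : ∀ j, D j ≠ 0 := by
    intro j hj0
    apply hz
    rw [← hDim j, hj0]
    rfl
  set PD : ℂ := ∏ j ∈ Finset.range m, D j with hPD
  have hPDne : PD ≠ 0 := Finset.prod_ne_zero_iff.mpr fun j _ => hDne j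
  have hG : aeval z g = algebraMap ℝ ℂ g.leadingCoeff * PD := by
    have := aeval_prod_form hgR (S := ℂ) z
    rw [← hB, lenB] at this
    exact this
  have hGne : aeval z g ≠ 0 := aeval_ne_zero_of_im hg0 (rr_splits hgR) hz
  have hFne : aeval z f ≠ 0 := aeval_ne_zero_of_im hf0 (rr_splits hfR) hz
  -- the key identity over ℂ
  have hbasis : ∀ i, i ∈ Finset.range m → aeval z (Lagrange.basis (Finset.range m) v i)
      = algebraMap ℝ ℂ ((∏ j ∈ (Finset.range m).erase i, (v i - v j))⁻¹) * (PD * (D i)⁻¹) := by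
    intro i hi
    rw [Lagrange.basis, map_prod]
    have e1 : ∀ j ∈ (Finset.range m).erase i,
        aeval z (Lagrange.basisDivisor (v i) (v j))
        = algebraMap ℝ ℂ ((v i - v j)⁻¹) * D j := by
      intro j _
      rw [Lagrange.basisDivisor, map_mul, aeval_C, map_sub, aeval_X, aeval_C]
    rw [Finset.prod_congr rfl e1, Finset.prod_mul_distrib, ← map_prod,
      Finset.prod_inv_distrib]
    congr 1
    have := Finset.prod_erase_mul (Finset.range m) D hi
    field_simp [hDne i]
    linear_combination this
  have hkey : aeval z f - algebraMap ℝ ℂ c * aeval z g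
      = ∑ i ∈ Finset.range m, algebraMap ℝ ℂ (lam i) * (PD * (D i)⁻¹) := by
    have h1 := congrArg (aeval z (R := ℝ) (A := ℂ)) interp
    rw [map_sub, map_mul, aeval_C] at h1
    rw [h1, Lagrange.interpolate_apply, map_sum]
    apply Finset.sum_congr rfl
    intro i hi
    rw [map_mul, aeval_C, hbasis i hi]
    have hgz : g.eval (v i) = 0 := isRoot_of_mem_roots (hvmem i (Finset.mem_range.mp hi))
    rw [eval_sub, eval_mul, eval_C, hgz, mul_zero, sub_zero, hlam]
    rw [map_mul, mul_assoc]
  -- suppose the linear combination vanishes at z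
  intro h0
  have ha' : (algebraMap ℝ ℂ a) ≠ 0 := by
    simpa [Complex.coe_algebraMap] using (Complex.ofReal_ne_zero.mpr ha)
  have hlcg : algebraMap ℝ ℂ g.leadingCoeff ≠ 0 := by
    simpa [Complex.coe_algebraMap] using Complex.ofReal_ne_zero.mpr (ne_of_gt hlg)
  have hF0 : algebraMap ℝ ℂ a * aeval z f + algebraMap ℝ ℂ b * aeval z g = 0 := by
    rw [← h0, map_add, map_mul, map_mul, aeval_C, aeval_C]
  set t : ℝ := -b / a with ht
  have hFt : aeval z f = algebraMap ℝ ℂ t * aeval z g := by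
    rw [ht, map_div₀, map_neg, div_mul_eq_mul_div, eq_div_iff ha']
    linear_combination hF0
  -- divide the key identity by aeval z g
  have hmain : algebraMap ℝ ℂ (t - c)
      = ∑ i ∈ Finset.range m, algebraMap ℝ ℂ (lam i / g.leadingCoeff) * (D i)⁻¹ := by
    apply mul_right_cancel₀ hGne
    have hR : (∑ i ∈ Finset.range m, algebraMap ℝ ℂ (lam i / g.leadingCoeff) * (D i)⁻¹)
        * aeval z g
        = ∑ i ∈ Finset.range m, algebraMap ℝ ℂ (lam i) * (PD * (D i)⁻¹) := by
      rw [Finset.sum_mul]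
      apply Finset.sum_congr rfl
      intro i _
      rw [hG, map_div₀]
      calc algebraMap ℝ ℂ (lam i) / algebraMap ℝ ℂ g.leadingCoeff * (D i)⁻¹ *
            (algebraMap ℝ ℂ g.leadingCoeff * PD)
          = algebraMap ℝ ℂ (lam i) * (PD * (D i)⁻¹) *
            (algebraMap ℝ ℂ g.leadingCoeff / algebraMap ℝ ℂ g.leadingCoeff) := by ring
        _ = algebraMap ℝ ℂ (lam i) * (PD * (D i)⁻¹) := by rw [div_self hlcg, mul_one]
    rw [hR, ← hkey, map_sub, sub_mul, ← hFt]
  -- take imaginary parts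
  have him := congrArg Complex.im hmain
  rw [Complex.im_sum] at him
  have hLHS : (algebraMap ℝ ℂ (t - c)).im = 0 := by
    simp [Complex.coe_algebraMap]
  have hterm : ∀ i ∈ Finset.range m, (algebraMap ℝ ℂ (lam i / g.leadingCoeff) * (D i)⁻¹).im
      = (lam i / g.leadingCoeff / Complex.normSq (D i)) * (-z.im) := by
    intro i _
    rw [show algebraMap ℝ ℂ (lam i / g.leadingCoeff)
        = ((lam i / g.leadingCoeff : ℝ) : ℂ) from rfl,
      Complex.mul_im, Complex.inv_im, hDim i, Complex.ofReal_re, Complex.ofReal_im]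
    ring
  rw [hLHS, Finset.sum_congr rfl hterm, ← Finset.sum_mul] at him
  have hS : 0 < ∑ i ∈ Finset.range m, lam i / g.leadingCoeff / Complex.normSq (D i) := by
    apply Finset.sum_pos
    · intro i hi
      rw [Finset.mem_range] at hi
      apply div_pos (div_pos (hlampos i hi) hlg)
      exact Complex.normSq_pos.mpr (hDne i)
    · exact ⟨0, Finset.mem_range.mpr (by omega)⟩
  apply hz
  rcases mul_eq_zero.mp him.symm with h | h
  · exact absurd h (ne_of_gt hS)
  · linarith

lemma natDegree_pos_of_mem_roots {f : Polynomial ℝ} {r : ℝ} (h : r ∈ f.roots) :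
    1 ≤ f.natDegree := by
  have h1 : 0 < Multiset.card f.roots := Multiset.card_pos.mpr (fun he => by simp [he] at h)
  have h2 := card_roots' f
  omega

lemma interlaces_factor {f g f₁ g₁ : Polynomial ℝ} {r : ℝ} (hI : Interlaces f g)
    (hf : f = (X - C r) * f₁) (hg : g = (X - C r) * g₁)
    (hrf : r ∈ f.roots) (hrg : r ∈ g.roots) : Interlaces f₁ g₁ := by
  obtain ⟨hfR, hgR, hlf, hlg, hdeg, hle, hge⟩ := hI
  have hf0 := hfR.1
  have hg0 := hgR.1
  have hf10 : f₁ ≠ 0 := by rintro rfl; simp at hf; exact hf0 hf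
  have hg10 : g₁ ≠ 0 := by rintro rfl; simp at hg; exact hg0 hg
  have hXC : (X - C r) ≠ (0 : Polynomial ℝ) := X_sub_C_ne_zero r
  have hdf : f.natDegree = f₁.natDegree + 1 := by
    rw [hf, natDegree_mul hXC hf10, natDegree_X_sub_C]; omega
  have hdg : g.natDegree = g₁.natDegree + 1 := by
    rw [hg, natDegree_mul hXC hg10, natDegree_X_sub_C]; omega
  have hrootsf : f.roots = r ::ₘ f₁.roots := by
    rw [hf, roots_mul (hf ▸ hf0), roots_X_sub_C, Multiset.singleton_add]
  have hrootsg : g.roots = r ::ₘ g₁.roots := by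
    rw [hg, roots_mul (hg ▸ hg0), roots_X_sub_C, Multiset.singleton_add]
  have hfR1 : RealRooted f₁ := by
    refine ⟨hf10, ?_⟩
    have := hfR.2
    rw [hrootsf, Multiset.card_cons, hdf] at this
    omega
  have hgR1 : RealRooted g₁ := by
    refine ⟨hg10, ?_⟩
    have := hgR.2
    rw [hrootsg, Multiset.card_cons, hdg] at this
    omega
  have hlcf : f₁.leadingCoeff = f.leadingCoeff := by
    rw [hf, leadingCoeff_mul, (monic_X_sub_C r).leadingCoeff, one_mul]
  have hlcg : g₁.leadingCoeff = g.leadingCoeff := by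
    rw [hg, leadingCoeff_mul, (monic_X_sub_C r).leadingCoeff, one_mul]
  have hsrdf : sortedRootsDesc f₁ = (sortedRootsDesc f).erase r := by
    refine (srd_unique ?_ ?_).symm
    · exact List.Pairwise.sublist (List.erase_sublist) (srd_sorted f)
    · rw [← Multiset.coe_erase, srd_coe, hrootsf, Multiset.erase_cons_head]
  have hsrdg : sortedRootsDesc g₁ = (sortedRootsDesc g).erase r := by
    refine (srd_unique ?_ ?_).symm
    · exact List.Pairwise.sublist (List.erase_sublist) (srd_sorted g)
    · rw [← Multiset.coe_erase, srd_coe, hrootsg, Multiset.erase_cons_head]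
  have hmemA : r ∈ sortedRootsDesc f := srd_mem.mpr hrf
  have hmemB : r ∈ sortedRootsDesc g := srd_mem.mpr hrg
  have h1' : ∀ i (hfi : i < (sortedRootsDesc f).length) (hgi : i < (sortedRootsDesc g).length),
      (sortedRootsDesc f)[i] ≤ (sortedRootsDesc g)[i] := by
    intro i hfi hgi
    simpa using hle i hfi hgi
  have h2' : ∀ i (hfi : i < (sortedRootsDesc f).length)
      (hgi : i + 1 < (sortedRootsDesc g).length),
      (sortedRootsDesc g)[i+1] ≤ (sortedRootsDesc f)[i] := by
    intro i hfi hgi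
    simpa using hge i hfi hgi
  obtain ⟨k1, k2⟩ := interlace_erase (srd_sorted f) (srd_sorted g) hmemA hmemB h1' h2'
  refine ⟨hfR1, hgR1, hlcf ▸ hlf, hlcg ▸ hlg, by omega, ?_, ?_⟩
  · intro i hfi hgi
    simp only [List.get_eq_getElem]
    simp only [hsrdf, hsrdg] at hfi hgi ⊢
    exact k1 i hfi hgi
  · intro i hfi hgi
    simp only [List.get_eq_getElem]
    simp only [hsrdf, hsrdg] at hfi hgi ⊢
    exact k2 i hfi hgi

lemma obreshkoff_aux : ∀ N f g, f.natDegree = N → Interlaces f g → ∀ (z : ℂ), z.im ≠ 0 →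
    ∀ a b : ℝ, C a * f + C b * g = 0 ∨ aeval z (C a * f + C b * g) ≠ 0 := by
  intro N
  induction N using Nat.strong_induction_on with
  | _ N IH =>
    intro f g hN hI z hz a b
    by_cases hab0 : C a * f + C b * g = 0
    · exact Or.inl hab0
    right
    by_cases hcr : ∃ r, r ∈ f.roots ∧ r ∈ g.roots
    · obtain ⟨r, hrf, hrg⟩ := hcr
      obtain ⟨f₁, hf⟩ := dvd_iff_isRoot.mpr (isRoot_of_mem_roots hrf)
      obtain ⟨g₁, hg⟩ := dvd_iff_isRoot.mpr (isRoot_of_mem_roots hrg)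
      have hI₁ := interlaces_factor hI hf hg hrf hrg
      have hN1 : 1 ≤ f.natDegree := natDegree_pos_of_mem_roots hrf
      have hf10 : f₁ ≠ 0 := hI₁.1.1
      have hd : f₁.natDegree = N - 1 := by
        have : f.natDegree = f₁.natDegree + 1 := by
          rw [hf, natDegree_mul (X_sub_C_ne_zero r) hf10, natDegree_X_sub_C]; omega
        omega
      have hfactor : C a * f + C b * g = (X - C r) * (C a * f₁ + C b * g₁) := by
        rw [hf, hg]; ring
      rcases IH (N-1) (by omega) f₁ g₁ hd hI₁ z hz a b with h | h
      · exact absurd (by rw [hfactor, h, mul_zero]) hab0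
      · rw [hfactor, map_mul]
        refine mul_ne_zero ?_ h
        intro h'
        apply hz
        have : (aeval z (X - C r)).im = 0 := by rw [h']; rfl
        simpa using this
    · push_neg at hcr
      obtain ⟨hfR, hgR, hlf, hlg, hdeg, -, -⟩ := id hI
      by_cases hdeg1 : 1 ≤ f.natDegree
      · by_cases ha : a = 0
        · subst ha
          rw [map_zero, zero_mul, zero_add] at hab0 ⊢
          have hb : b ≠ 0 := by rintro rfl; simp at hab0
          rw [map_mul, aeval_C]
          refine mul_ne_zero ?_ (aeval_ne_zero_of_im hgR.1 (rr_splits hgR) hz)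
          simpa using Complex.ofReal_ne_zero.mpr hb
        · by_cases hb : b = 0
          · subst hb
            rw [map_zero, zero_mul, add_zero] at hab0 ⊢
            rw [map_mul, aeval_C]
            refine mul_ne_zero ?_ (aeval_ne_zero_of_im hfR.1 (rr_splits hfR) hz)
            simpa using Complex.ofReal_ne_zero.mpr ha
          · exact strict_case hI hcr hdeg1 hz ha hb
      · have hd1 : (C a * f + C b * g).natDegree ≤ 1 := by
          have h1 : (C a * f).natDegree ≤ 0 := by
            have := natDegree_C_mul_le a f
            omega
          have h2 : (C b * g).natDegree ≤ 1 := by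
            have := natDegree_C_mul_le b g
            omega
          calc (C a * f + C b * g).natDegree ≤ max (C a * f).natDegree (C b * g).natDegree :=
              natDegree_add_le _ _
            _ ≤ 1 := by omega
        exact aeval_ne_zero_of_im hab0 (Splits.of_natDegree_le_one hd1) hz

/-- Obreshkoff's theorem: if the zeros of `f` interlace the zeros of `g`
(both real-rooted with positive leading coefficients), then every real linear
combination `a·f + b·g` is real-rooted or zero. -/
theorem obreshkoff (f g : Polynomial ℝ) (h : Interlaces f g) :
    ∀ a b : ℝ, C a * f + C b * g = 0 ∨ RealRooted (C a * f + C b * g) := by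
  intro a b
  by_cases h0 : C a * f + C b * g = 0
  · exact Or.inl h0
  · right
    apply realRooted_of_roots_real h0
    intro z hz0
    by_contra him
    rcases obreshkoff_aux f.natDegree f g rfl h z him a b with h' | h'
    · exact h0 h'
    · exact h' hz0
end

section
/- Define f_n ∈ ℝ[t] by f_0 = 0, f_1 = 1 + t, and f_{n+1} = (1+t)·f_n + (c_{n+1} - 1)·t·f_{n-1} with c_i positive integers. Then each f_n has nonnegative integer coefficients and is palindromic of degree n, i.e., t^n f_n(1/t) = f_n(t). -/
open Polynomial

lemma chow_step (p q : Polynomial ℝ) (n : ℕ) (hn : 1 ≤ n) (a : ℕ)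
    (hpd : p.natDegree = n) (hpc : ∀ i, ∃ m : ℕ, p.coeff i = (m : ℝ))
    (hpr : p.reverse = p)
    (hqd : q.natDegree = n - 1) (hqc : ∀ i, ∃ m : ℕ, q.coeff i = (m : ℝ))
    (hqr : q.reverse = q) :
    ((1 + X) * p + C (a : ℝ) * X * q).natDegree = n + 1 ∧
      (∀ i, ∃ m : ℕ, ((1 + X) * p + C (a : ℝ) * X * q).coeff i = (m : ℝ)) ∧
        ((1 + X) * p + C (a : ℝ) * X * q).reverse = (1 + X) * p + C (a : ℝ) * X * q := by
  have hrev_def : ∀ r : Polynomial ℝ, r.reverse = r.reflect r.natDegree := fun _ => rfl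
  have hpr' : p.reflect n = p := by rw [← hpd, ← hrev_def]; exact hpr
  have hqr' : q.reflect (n - 1) = q := by rw [← hqd, ← hrev_def]; exact hqr
  set r : Polynomial ℝ := (1 + X) * p + C (a : ℝ) * X * q with hr
  have hp0 : p ≠ 0 := by
    intro h
    rw [h, natDegree_zero] at hpd
    omega
  have h1X : (1 + X : Polynomial ℝ).natDegree ≤ 1 := by
    compute_degree
  have hcoeff : ∀ i, r.coeff (i + 1) = p.coeff (i + 1) + p.coeff i + a * q.coeff i := by
    intro i
    rw [hr, coeff_add, add_mul, one_mul, coeff_add, coeff_X_mul, mul_assoc, coeff_C_mul,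
      coeff_X_mul]
  have hcoeff0 : r.coeff 0 = p.coeff 0 := by
    rw [hr, coeff_add, add_mul, one_mul, coeff_add, mul_assoc, coeff_C_mul, mul_coeff_zero,
      mul_coeff_zero, coeff_X_zero]
    ring
  have hqn : q.coeff n = 0 := by
    apply coeff_eq_zero_of_natDegree_lt
    omega
  have hdeg : r.natDegree = n + 1 := by
    apply le_antisymm
    · apply natDegree_add_le_of_degree_le
      · exact (natDegree_mul_le).trans (by omega)
      · refine (natDegree_mul_le).trans ?_
        have : (C (a : ℝ) * X).natDegree ≤ 1 := by compute_degree
        omega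
    · apply le_natDegree_of_ne_zero
      rw [hcoeff n, hqn, coeff_eq_zero_of_natDegree_lt (by omega), mul_zero, add_zero, zero_add,
        ← hpd]
      exact mt leadingCoeff_eq_zero.mp hp0
  refine ⟨hdeg, ?_, ?_⟩
  · intro i
    match i with
    | 0 =>
      obtain ⟨m, hm⟩ := hpc 0
      exact ⟨m, by rw [hcoeff0, hm]⟩
    | i + 1 =>
      obtain ⟨m1, hm1⟩ := hpc (i + 1)
      obtain ⟨m2, hm2⟩ := hpc i
      obtain ⟨m3, hm3⟩ := hqc i
      refine ⟨m1 + m2 + a * m3, ?_⟩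
      rw [hcoeff, hm1, hm2, hm3]
      push_cast
      ring
  · have r1 : revAt 1 1 = 0 := rfl
    have r2 : revAt 2 1 = 1 := rfl
    have hX1 : reflect 1 (X : Polynomial ℝ) = 1 := by
      rw [← pow_one (X : Polynomial ℝ), reflect_monomial, r1, pow_zero]
    have hX2 : reflect 2 (X : Polynomial ℝ) = X := by
      rw [← pow_one (X : Polynomial ℝ), reflect_monomial, r2]
    rw [hrev_def, hdeg, hr, reflect_add]
    have e1 : ((1 + X) * p).reflect (n + 1) = (1 + X) * p := by
      have := reflect_mul (1 + X) p h1X hpd.le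
      rw [show 1 + n = n + 1 from by omega] at this
      rw [this, reflect_add, hpr', reflect_one, hX1]
      ring
    have e2 : (C (a : ℝ) * X * q).reflect (n + 1) = C (a : ℝ) * X * q := by
      have h2 : (C (a : ℝ) * X).natDegree ≤ 2 := by compute_degree!
      have := reflect_mul (C (a : ℝ) * X) q h2 hqd.le
      rw [show 2 + (n - 1) = n + 1 from by omega] at this
      rw [this, hqr', reflect_C_mul, hX2]
    rw [e1, e2]

/-- For `f 0 = 0`, `f 1 = 1 + t`,
`f (n+1) = (1+t)·f n + (c (n+1) - 1)·t·f (n-1)` with `c i` positive integers,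
each `f n` (for `n ≥ 1`) has nonnegative integer coefficients and is
palindromic of degree `n`, i.e. `t^n f(1/t) = f(t)`. -/
theorem maximal_ranked_chow_palindromic (c : ℕ → ℕ) (hc : ∀ i, 1 ≤ c i)
    (f : ℕ → Polynomial ℝ) (h0 : f 0 = 0) (h1 : f 1 = 1 + X)
    (hrec : ∀ n : ℕ, 1 ≤ n →
      f (n + 1) = (1 + X) * f n + C ((c (n + 1) : ℝ) - 1) * X * f (n - 1)) :
    ∀ n : ℕ, 1 ≤ n →
      (f n).natDegree = n ∧ (∀ i, ∃ m : ℕ, (f n).coeff i = (m : ℝ)) ∧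
        (f n).reverse = f n := by
  have hcast : ∀ k, C ((c k : ℝ) - 1) = C (((c k - 1 : ℕ) : ℝ)) := by
    intro k
    congr 1
    have := hc k
    push_cast [Nat.cast_sub this]
    ring
  set S : ℕ → Prop := fun n =>
    (f n).natDegree = n ∧ (∀ i, ∃ m : ℕ, (f n).coeff i = (m : ℝ)) ∧ (f n).reverse = f n with hS
  have s1 : S 1 := by
    refine ⟨?_, ?_, ?_⟩
    · rw [h1]; compute_degree!
    · intro i
      match i with
      | 0 => exact ⟨1, by simp [h1, coeff_one]⟩
      | 1 => exact ⟨1, by simp [h1, coeff_one]⟩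
      | i + 2 => exact ⟨0, by simp [h1, coeff_one, coeff_X]⟩
    · have hd : (f 1).natDegree = 1 := by rw [h1]; compute_degree!
      have hrev_def : ∀ r : Polynomial ℝ, r.reverse = r.reflect r.natDegree := fun _ => rfl
      rw [hrev_def, hd, h1, reflect_add, reflect_one, ← pow_one (X : Polynomial ℝ),
        reflect_monomial, revAt_le (le_refl 1)]
      norm_num
      ring
  have key : ∀ n, 1 ≤ n → S n ∧ S (n + 1) := by
    intro n hn
    induction n, hn using Nat.le_induction with
    | base =>
      refine ⟨s1, ?_⟩
      have hrw : f 2 = (1 + X) * f 1 + C (((c 2 - 1 : ℕ) : ℝ)) * X * f 0 := by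
        rw [hrec 1 le_rfl, ← hcast]
      have h := chow_step (f 1) (f 0) 1 le_rfl (c 2 - 1) s1.1 s1.2.1 s1.2.2
        (by simp [h0]) (fun i => ⟨0, by simp [h0]⟩) (by simp [h0])
      rw [← hrw] at h
      exact h
    | succ n hn ih =>
      refine ⟨ih.2, ?_⟩
      obtain ⟨hd, hco, hrev⟩ := ih.2
      have hrw : f (n + 2) = (1 + X) * f (n + 1) + C (((c (n + 2) - 1 : ℕ) : ℝ)) * X * f n :=
        by rw [hrec (n + 1) (by omega), ← hcast]; norm_num
      have h := chow_step (f (n + 1)) (f n) (n + 1) (by omega) (c (n + 2) - 1) hd hco hrev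
        (by rw [ih.1.1]; omega) ih.1.2.1 ih.1.2.2
      rw [← hrw] at h
      exact h
  exact fun n hn => (key n hn).1
end

section
/- For a finite bounded graded poset P of rank r, the Chow polynomial satisfies H_P(t) = 1 + t · ∑_{x ∈ P, ρ(x) ≥ 2} H_{τ([0̂, x])}(t), where τ denotes truncation (removing coatoms). -/
open Polynomial Finset

attribute [local instance] Classical.propDecidable

variable {P : Type*} [PartialOrder P] [Fintype P]

noncomputable local instance : LocallyFiniteOrder P := Fintype.toLocallyFiniteOrder

noncomputable def posetMu (S : Finset P) (x y : P) : ℤ :=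
  if x = y then 1
  else -∑ z ∈ (S ∩ Finset.Ico x y).attach, posetMu S x z.1
termination_by (Finset.Icc x y).card
decreasing_by
  · have hz := (Finset.mem_inter.mp z.2).2
    rw [Finset.mem_Ico] at hz
    refine Finset.card_lt_card ⟨Finset.Icc_subset_Icc_right hz.2.le, fun hsub => ?_⟩
    have := hsub (Finset.mem_Icc.mpr ⟨hz.1.trans hz.2.le, le_refl y⟩)
    exact absurd (Finset.mem_Icc.mp this).2 (fun h => lt_irrefl _ (lt_of_lt_of_le hz.2 h))

noncomputable def posetChi (S : Finset P) (ρ : P → ℕ) (x y : P) : Polynomial ℝ :=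
  ∑ z ∈ S ∩ Finset.Icc x y, C (posetMu S x z : ℝ) * X ^ (ρ y - ρ z)

noncomputable def posetChibar (S : Finset P) (ρ : P → ℕ) (x y : P) : Polynomial ℝ :=
  if x = y then -1 else posetChi S ρ x y /ₘ (X - C 1)

noncomputable def posetChow (S : Finset P) (ρ : P → ℕ) (x y : P) : Polynomial ℝ :=
  if x = y then 1
  else ∑ z ∈ (S ∩ Finset.Ioc x y).attach, posetChibar S ρ x z.1 * posetChow S ρ z.1 y
termination_by (Finset.Icc x y).card
decreasing_by
  · have hz := (Finset.mem_inter.mp z.2).2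
    rw [Finset.mem_Ioc] at hz
    refine Finset.card_lt_card ⟨Finset.Icc_subset_Icc_left hz.1.le, fun hsub => ?_⟩
    have := hsub (Finset.mem_Icc.mpr ⟨le_refl x, hz.1.le.trans hz.2⟩)
    exact absurd (Finset.mem_Icc.mp this).1 (fun h => lt_irrefl _ (lt_of_lt_of_le hz.1 h))

noncomputable def posetG (S : Finset P) (ρ : P → ℕ) (x y : P) : Polynomial ℝ :=
  ∑ z ∈ S ∩ Finset.Icc x y, X ^ (ρ z - ρ x) * posetChow S ρ z y

def IsRankFn [BoundedOrder P] (ρ : P → ℕ) : Prop :=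
  ρ ⊥ = 0 ∧ ∀ x y : P, x ⋖ y → ρ y = ρ x + 1

-- ### basic unfolding lemmas

lemma posetMu_self (S : Finset P) (x : P) : posetMu S x x = 1 := by
  rw [posetMu]; simp

lemma posetMu_eq (S : Finset P) {x y : P} (h : x ≠ y) :
    posetMu S x y = -∑ z ∈ S ∩ Finset.Ico x y, posetMu S x z := by
  rw [posetMu, if_neg h, Finset.sum_attach]

lemma posetChow_self (S : Finset P) (ρ : P → ℕ) (x : P) : posetChow S ρ x x = 1 := by
  rw [posetChow]; simp

lemma posetChow_eq (S : Finset P) (ρ : P → ℕ) {x y : P} (h : x ≠ y) :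
    posetChow S ρ x y
      = ∑ z ∈ S ∩ Finset.Ioc x y, posetChibar S ρ x z * posetChow S ρ z y := by
  rw [posetChow, if_neg h]
  exact Finset.sum_attach _ fun z => posetChibar S ρ x z * posetChow S ρ z y

lemma card_Icc_lt_right {x z y : P} (hxz : x ≤ z) (hzy : z < y) :
    (Finset.Icc x z).card < (Finset.Icc x y).card := by
  refine Finset.card_lt_card ⟨Finset.Icc_subset_Icc_right hzy.le, fun hsub => ?_⟩
  have := hsub (Finset.mem_Icc.mpr ⟨hxz.trans hzy.le, le_refl y⟩)
  exact absurd (Finset.mem_Icc.mp this).2 hzy.not_ge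

lemma card_Icc_lt_left {x z y : P} (hxz : x < z) (hzy : z ≤ y) :
    (Finset.Icc z y).card < (Finset.Icc x y).card := by
  refine Finset.card_lt_card ⟨Finset.Icc_subset_Icc_left hxz.le, fun hsub => ?_⟩
  have := hsub (Finset.mem_Icc.mpr ⟨le_refl x, hxz.le.trans hzy⟩)
  exact absurd (Finset.mem_Icc.mp this).1 hxz.not_ge

lemma inter_Icc_sub {S T : Finset P} {x y z w : P}
    (h : S ∩ Finset.Icc x y = T ∩ Finset.Icc x y)
    (hsub : Finset.Icc z w ⊆ Finset.Icc x y) :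
    S ∩ Finset.Icc z w = T ∩ Finset.Icc z w := by
  have h1 : Finset.Icc x y ∩ Finset.Icc z w = Finset.Icc z w :=
    Finset.inter_eq_right.mpr hsub
  calc S ∩ Finset.Icc z w = S ∩ Finset.Icc x y ∩ Finset.Icc z w := by
        rw [Finset.inter_assoc, h1]
    _ = T ∩ Finset.Icc x y ∩ Finset.Icc z w := by rw [h]
    _ = T ∩ Finset.Icc z w := by rw [Finset.inter_assoc, h1]

lemma inter_Ico_of_inter_Icc {S T : Finset P} {x y : P}
    (h : S ∩ Finset.Icc x y = T ∩ Finset.Icc x y) :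
    S ∩ Finset.Ico x y = T ∩ Finset.Ico x y := by
  ext z
  have hz : z ∈ Finset.Ico x y → z ∈ Finset.Icc x y := by
    simp only [Finset.mem_Ico, Finset.mem_Icc]
    exact fun hz => ⟨hz.1, hz.2.le⟩
  simp only [Finset.mem_inter]
  constructor
  · rintro ⟨h1, h2⟩
    refine ⟨?_, h2⟩
    have := h ▸ Finset.mem_inter.mpr ⟨h1, hz h2⟩
    exact (Finset.mem_inter.mp this).1
  · rintro ⟨h1, h2⟩
    refine ⟨?_, h2⟩
    have := h.symm ▸ Finset.mem_inter.mpr ⟨h1, hz h2⟩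
    exact (Finset.mem_inter.mp this).1

lemma inter_Ioc_of_inter_Icc {S T : Finset P} {x y : P}
    (h : S ∩ Finset.Icc x y = T ∩ Finset.Icc x y) :
    S ∩ Finset.Ioc x y = T ∩ Finset.Ioc x y := by
  ext z
  have hz : z ∈ Finset.Ioc x y → z ∈ Finset.Icc x y := by
    simp only [Finset.mem_Ioc, Finset.mem_Icc]
    exact fun hz => ⟨hz.1.le, hz.2⟩
  simp only [Finset.mem_inter]
  constructor
  · rintro ⟨h1, h2⟩
    refine ⟨?_, h2⟩
    have := h ▸ Finset.mem_inter.mpr ⟨h1, hz h2⟩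
    exact (Finset.mem_inter.mp this).1
  · rintro ⟨h1, h2⟩
    refine ⟨?_, h2⟩
    have := h.symm ▸ Finset.mem_inter.mpr ⟨h1, hz h2⟩
    exact (Finset.mem_inter.mp this).1

lemma posetMu_congr_aux : ∀ (n : ℕ) (S T : Finset P) (x y : P),
    (Finset.Icc x y).card ≤ n →
    S ∩ Finset.Icc x y = T ∩ Finset.Icc x y →
    posetMu S x y = posetMu T x y := by
  intro n
  induction n with
  | zero =>
    intro S T x y hc _
    by_cases h : x = y
    · subst h; rw [posetMu_self, posetMu_self]
    · by_cases hxy : x ≤ y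
      · exfalso
        have : x ∈ Finset.Icc x y := Finset.mem_Icc.mpr ⟨le_refl x, hxy⟩
        have := Finset.card_pos.mpr ⟨x, this⟩
        omega
      · rw [posetMu_eq S h, posetMu_eq T h]
        have : Finset.Ico x y = ∅ := Finset.Ico_eq_empty (fun hl => hxy hl.le)
        rw [this]; simp
  | succ n ih =>
    intro S T x y hc hI
    by_cases h : x = y
    · subst h; rw [posetMu_self, posetMu_self]
    · rw [posetMu_eq S h, posetMu_eq T h, inter_Ico_of_inter_Icc hI]
      congr 1
      refine Finset.sum_congr rfl (fun z hz => ?_)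
      rw [Finset.mem_inter, Finset.mem_Ico] at hz
      refine ih S T x z ?_ (inter_Icc_sub hI (Finset.Icc_subset_Icc_right hz.2.2.le))
      have := card_Icc_lt_right hz.2.1 hz.2.2
      omega

lemma posetMu_congr {S T : Finset P} {x y : P}
    (hI : S ∩ Finset.Icc x y = T ∩ Finset.Icc x y) :
    posetMu S x y = posetMu T x y :=
  posetMu_congr_aux (Finset.Icc x y).card S T x y le_rfl hI

lemma posetChi_congr {S T : Finset P} {ρ ρ' : P → ℕ} {x y : P}
    (hI : S ∩ Finset.Icc x y = T ∩ Finset.Icc x y)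
    (hr : ∀ w ∈ Finset.Icc x y, ρ w = ρ' w) :
    posetChi S ρ x y = posetChi T ρ' x y := by
  by_cases hxy : x ≤ y
  · unfold posetChi
    rw [hI]
    refine Finset.sum_congr rfl (fun z hz => ?_)
    rw [Finset.mem_inter] at hz
    have hzI := hz.2
    rw [Finset.mem_Icc] at hzI
    rw [posetMu_congr (inter_Icc_sub hI (Finset.Icc_subset_Icc_right hzI.2)),
      hr z hz.2, hr y (Finset.mem_Icc.mpr ⟨hxy, le_refl y⟩)]
  · unfold posetChi
    rw [Finset.Icc_eq_empty hxy]
    simp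

lemma posetChibar_congr {S T : Finset P} {ρ ρ' : P → ℕ} {x y : P}
    (hI : S ∩ Finset.Icc x y = T ∩ Finset.Icc x y)
    (hr : ∀ w ∈ Finset.Icc x y, ρ w = ρ' w) :
    posetChibar S ρ x y = posetChibar T ρ' x y := by
  unfold posetChibar
  by_cases h : x = y
  · simp [h]
  · rw [if_neg h, if_neg h, posetChi_congr hI hr]

lemma posetChow_congr_aux : ∀ (n : ℕ) (S T : Finset P) (ρ ρ' : P → ℕ) (x y : P),
    (Finset.Icc x y).card ≤ n →
    S ∩ Finset.Icc x y = T ∩ Finset.Icc x y →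
    (∀ w ∈ Finset.Icc x y, ρ w = ρ' w) →
    posetChow S ρ x y = posetChow T ρ' x y := by
  intro n
  induction n with
  | zero =>
    intro S T ρ ρ' x y hc hI hr
    by_cases h : x = y
    · subst h; rw [posetChow_self, posetChow_self]
    · by_cases hxy : x ≤ y
      · exfalso
        have : x ∈ Finset.Icc x y := Finset.mem_Icc.mpr ⟨le_refl x, hxy⟩
        have := Finset.card_pos.mpr ⟨x, this⟩
        omega
      · rw [posetChow_eq S ρ h, posetChow_eq T ρ' h]
        have : Finset.Ioc x y = ∅ := Finset.Ioc_eq_empty (fun hl => hxy hl.le)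
        rw [this]; simp
  | succ n ih =>
    intro S T ρ ρ' x y hc hI hr
    by_cases h : x = y
    · subst h; rw [posetChow_self, posetChow_self]
    · rw [posetChow_eq S ρ h, posetChow_eq T ρ' h, inter_Ioc_of_inter_Icc hI]
      refine Finset.sum_congr rfl (fun z hz => ?_)
      rw [Finset.mem_inter, Finset.mem_Ioc] at hz
      have hxz : Finset.Icc x z ⊆ Finset.Icc x y := Finset.Icc_subset_Icc_right hz.2.2
      have hzy : Finset.Icc z y ⊆ Finset.Icc x y := Finset.Icc_subset_Icc_left hz.2.1.le
      rw [posetChibar_congr (inter_Icc_sub hI hxz) (fun w hw => hr w (hxz hw))]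
      congr 1
      refine ih S T ρ ρ' z y ?_ (inter_Icc_sub hI hzy) (fun w hw => hr w (hzy hw))
      have := card_Icc_lt_left hz.2.1 hz.2.2
      omega

lemma posetChow_congr {S T : Finset P} {ρ ρ' : P → ℕ} {x y : P}
    (hI : S ∩ Finset.Icc x y = T ∩ Finset.Icc x y)
    (hr : ∀ w ∈ Finset.Icc x y, ρ w = ρ' w) :
    posetChow S ρ x y = posetChow T ρ' x y :=
  posetChow_congr_aux (Finset.Icc x y).card S T ρ ρ' x y le_rfl hI hr

-- ### divisibility of chi

lemma inter_Icc_eq_insert {S : Finset P} {x y : P} (hxy : x ≤ y) (hy : y ∈ S) :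
    S ∩ Finset.Icc x y = insert y (S ∩ Finset.Ico x y) := by
  ext z
  simp only [Finset.mem_inter, Finset.mem_Icc, Finset.mem_Ico, Finset.mem_insert]
  constructor
  · rintro ⟨hzS, hxz, hzy⟩
    rcases eq_or_lt_of_le hzy with h | h
    · exact Or.inl h
    · exact Or.inr ⟨hzS, hxz, h⟩
  · rintro (h | ⟨hzS, hxz, hzy⟩)
    · subst h; exact ⟨hy, hxy, le_refl z⟩
    · exact ⟨hzS, hxz, hzy.le⟩

lemma posetMu_sum_Ico {S : Finset P} {x y : P} (h : x ≠ y) :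
    ∑ z ∈ S ∩ Finset.Ico x y, posetMu S x z = -posetMu S x y := by
  rw [posetMu_eq S h]; ring

lemma posetChi_eval_one {S : Finset P} (ρ : P → ℕ) {x y : P} (hxy : x < y) (hy : y ∈ S) :
    (posetChi S ρ x y).eval 1 = 0 := by
  unfold posetChi
  rw [eval_finset_sum]
  simp only [eval_mul, eval_C, eval_pow, eval_X, one_pow, mul_one]
  rw [inter_Icc_eq_insert hxy.le hy, Finset.sum_insert (by simp [Finset.mem_Ico])]
  have : ∑ z ∈ S ∩ Finset.Ico x y, ((posetMu S x z : ℝ)) = ((-posetMu S x y : ℤ) : ℝ) := by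
    rw [← posetMu_sum_Ico hxy.ne]
    push_cast
    ring
  rw [this]
  push_cast
  ring

lemma posetChibar_mul {S : Finset P} (ρ : P → ℕ) {x y : P} (hxy : x < y) (hy : y ∈ S) :
    (X - C 1) * posetChibar S ρ x y = posetChi S ρ x y := by
  rw [posetChibar, if_neg hxy.ne]
  have h := Polynomial.modByMonic_add_div (posetChi S ρ x y) (X - C (1:ℝ))
  rwa [Polynomial.modByMonic_X_sub_C_eq_C_eval, posetChi_eval_one ρ hxy hy, map_zero,
    zero_add] at h

-- ### rank lemmas

lemma rank_strictMono_aux {ρ : P → ℕ} (hρc : ∀ a b : P, a ⋖ b → ρ b = ρ a + 1) :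
    ∀ (n : ℕ) (x y : P), (Finset.Icc x y).card ≤ n → x < y → ρ x < ρ y := by
  intro n
  induction n with
  | zero =>
    intro x y hc hxy
    exfalso
    have : x ∈ Finset.Icc x y := Finset.mem_Icc.mpr ⟨le_refl x, hxy.le⟩
    have := Finset.card_pos.mpr ⟨x, this⟩
    omega
  | succ n ih =>
    intro x y hc hxy
    by_cases h : x ⋖ y
    · rw [hρc x y h]; omega
    · obtain ⟨m, hxm, hmy⟩ : ∃ m, x < m ∧ m < y := by
        by_contra hcon
        push_neg at hcon
        exact h ⟨hxy, fun m hm hm2 => absurd hm2 (by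
          intro hlt
          exact absurd hlt (by have := hcon m hm; exact fun h' => (this h').elim))⟩
      have h1 : ρ x < ρ m := ih x m (by have := card_Icc_lt_right hxm.le hmy; omega) hxm
      have h2 : ρ m < ρ y := ih m y (by have := card_Icc_lt_left hxm hmy.le; omega) hmy
      omega

lemma rank_strictMono {ρ : P → ℕ} (hρc : ∀ a b : P, a ⋖ b → ρ b = ρ a + 1)
    {x y : P} (h : x < y) : ρ x < ρ y :=
  rank_strictMono_aux hρc (Finset.Icc x y).card x y le_rfl h

lemma rank_mono {ρ : P → ℕ} (hρc : ∀ a b : P, a ⋖ b → ρ b = ρ a + 1)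
    {x y : P} (h : x ≤ y) : ρ x ≤ ρ y := by
  rcases eq_or_lt_of_le h with h | h
  · subst h; exact le_refl _
  · exact (rank_strictMono hρc h).le

lemma covby_of_rank {ρ : P → ℕ} (hρc : ∀ a b : P, a ⋖ b → ρ b = ρ a + 1)
    {z y : P} (hzy : z < y) (hr : ρ z + 1 = ρ y) : z ⋖ y := by
  refine ⟨hzy, fun m hm1 hm2 => ?_⟩
  have := rank_strictMono hρc hm1
  have := rank_strictMono hρc hm2
  omega

-- ### insert decompositions

lemma inter_Ioc_eq_insert {S : Finset P} {x y : P} (hxy : x < y) (hy : y ∈ S) :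
    S ∩ Finset.Ioc x y = insert y (S ∩ Finset.Ioo x y) := by
  ext z
  simp only [Finset.mem_inter, Finset.mem_Ioc, Finset.mem_Ioo, Finset.mem_insert]
  constructor
  · rintro ⟨hzS, hxz, hzy⟩
    rcases eq_or_lt_of_le hzy with h | h
    · exact Or.inl h
    · exact Or.inr ⟨hzS, hxz, h⟩
  · rintro (h | ⟨hzS, hxz, hzy⟩)
    · subst h; exact ⟨hy, hxy, le_refl z⟩
    · exact ⟨hzS, hxz, hzy.le⟩

lemma inter_Ico_eq_insert {S : Finset P} {x y : P} (hxy : x < y) (hx : x ∈ S) :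
    S ∩ Finset.Ico x y = insert x (S ∩ Finset.Ioo x y) := by
  ext z
  simp only [Finset.mem_inter, Finset.mem_Ico, Finset.mem_Ioo, Finset.mem_insert]
  constructor
  · rintro ⟨hzS, hxz, hzy⟩
    rcases eq_or_lt_of_le hxz with h | h
    · exact Or.inl h.symm
    · exact Or.inr ⟨hzS, h, hzy⟩
  · rintro (h | ⟨hzS, hxz, hzy⟩)
    · subst h; exact ⟨hx, le_refl z, hxy⟩
    · exact ⟨hzS, hxz.le, hzy⟩

lemma y_not_mem_inter_Ioo {S : Finset P} {x y : P} : y ∉ S ∩ Finset.Ioo x y := by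
  simp [Finset.mem_Ioo]

lemma x_not_mem_inter_Ioo {S : Finset P} {x y : P} : x ∉ S ∩ Finset.Ioo x y := by
  simp [Finset.mem_Ioo]

-- ### matrices

noncomputable def matN (S : Finset P) (ρ : P → ℕ) : Matrix P P (Polynomial ℝ) :=
  Matrix.of fun x y => if x ∈ S ∧ y ∈ S ∧ x < y then -(posetChibar S ρ x y) else 0

noncomputable def matK (S : Finset P) (ρ : P → ℕ) : Matrix P P (Polynomial ℝ) :=
  Matrix.of fun x y => if x ∈ S ∧ y ∈ S ∧ x < y then posetChow S ρ x y else 0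

lemma matNK (S : Finset P) (ρ : P → ℕ) :
    matN S ρ + matK S ρ + matN S ρ * matK S ρ = 0 := by
  ext x y
  simp only [Matrix.add_apply, Matrix.mul_apply, Matrix.zero_apply, matN, matK,
    Matrix.of_apply]
  by_cases hc : x ∈ S ∧ y ∈ S ∧ x < y
  · obtain ⟨hx, hy, hxy⟩ := hc
    rw [if_pos ⟨hx, hy, hxy⟩, if_pos ⟨hx, hy, hxy⟩]
    have hsum : ∑ z : P, (if x ∈ S ∧ z ∈ S ∧ x < z then -(posetChibar S ρ x z) else 0) *
        (if z ∈ S ∧ y ∈ S ∧ z < y then posetChow S ρ z y else 0)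
        = ∑ z ∈ S ∩ Finset.Ioo x y, -(posetChibar S ρ x z * posetChow S ρ z y) := by
      rw [← Finset.sum_subset (Finset.subset_univ (S ∩ Finset.Ioo x y))]
      · refine Finset.sum_congr rfl fun z hz => ?_
        rw [Finset.mem_inter, Finset.mem_Ioo] at hz
        rw [if_pos ⟨hx, hz.1, hz.2.1⟩, if_pos ⟨hz.1, hy, hz.2.2⟩]
        ring
      · intro z _ hz
        rw [Finset.mem_inter, Finset.mem_Ioo] at hz
        by_cases h1 : x ∈ S ∧ z ∈ S ∧ x < z
        · have h2 : ¬(z ∈ S ∧ y ∈ S ∧ z < y) := fun h2 => hz ⟨h1.2.1, h1.2.2, h2.2.2⟩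
          rw [if_neg h2, mul_zero]
        · rw [if_neg h1, zero_mul]
    rw [hsum]
    have hrec := posetChow_eq S ρ hxy.ne
    rw [inter_Ioc_eq_insert hxy hy, Finset.sum_insert y_not_mem_inter_Ioo,
      posetChow_self] at hrec
    rw [hrec, Finset.sum_neg_distrib]
    ring
  · rw [if_neg hc, if_neg hc]
    have hz : ∀ z : P, (if x ∈ S ∧ z ∈ S ∧ x < z then -(posetChibar S ρ x z) else 0) *
        (if z ∈ S ∧ y ∈ S ∧ z < y then posetChow S ρ z y else 0) = 0 := by
      intro z
      by_cases h1 : x ∈ S ∧ z ∈ S ∧ x < z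
      · by_cases h2 : z ∈ S ∧ y ∈ S ∧ z < y
        · exact absurd ⟨h1.1, h2.2.1, h1.2.2.trans h2.2.2⟩ hc
        · rw [if_neg h2, mul_zero]
      · rw [if_neg h1, zero_mul]
    rw [Finset.sum_congr rfl fun z _ => hz z]
    simp

lemma chow_right {S : Finset P} (ρ : P → ℕ) {x y : P} (hx : x ∈ S) (hy : y ∈ S)
    (hxy : x < y) :
    posetChow S ρ x y = ∑ z ∈ S ∩ Finset.Ico x y, posetChow S ρ x z * posetChibar S ρ z y := by
  have h1 : (1 + matN S ρ) * (1 + matK S ρ) = 1 := by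
    have e : (1 + matN S ρ) * (1 + matK S ρ)
        = 1 + (matN S ρ + matK S ρ + matN S ρ * matK S ρ) := by noncomm_ring
    rw [e, matNK, add_zero]
  have h2 : (1 + matK S ρ) * (1 + matN S ρ) = 1 := mul_eq_one_comm.mp h1
  have h3 : matK S ρ + matN S ρ + matK S ρ * matN S ρ = 0 := by
    have e : (1 + matK S ρ) * (1 + matN S ρ)
        = 1 + (matK S ρ + matN S ρ + matK S ρ * matN S ρ) := by noncomm_ring
    rw [e] at h2
    have := add_left_cancel (h2.trans (add_zero 1).symm)
    exact this
  have h4 : (matK S ρ + matN S ρ + matK S ρ * matN S ρ) x y = 0 := by rw [h3]; rfl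
  simp only [Matrix.add_apply, Matrix.mul_apply, matN, matK, Matrix.of_apply] at h4
  rw [if_pos ⟨hx, hy, hxy⟩, if_pos ⟨hx, hy, hxy⟩] at h4
  have hsum : ∑ z : P, (if x ∈ S ∧ z ∈ S ∧ x < z then posetChow S ρ x z else 0) *
      (if z ∈ S ∧ y ∈ S ∧ z < y then -(posetChibar S ρ z y) else 0)
      = ∑ z ∈ S ∩ Finset.Ioo x y, -(posetChow S ρ x z * posetChibar S ρ z y) := by
    rw [← Finset.sum_subset (Finset.subset_univ (S ∩ Finset.Ioo x y))]
    · refine Finset.sum_congr rfl fun z hz => ?_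
      rw [Finset.mem_inter, Finset.mem_Ioo] at hz
      rw [if_pos ⟨hx, hz.1, hz.2.1⟩, if_pos ⟨hz.1, hy, hz.2.2⟩]
      ring
    · intro z _ hz
      rw [Finset.mem_inter, Finset.mem_Ioo] at hz
      by_cases h1 : x ∈ S ∧ z ∈ S ∧ x < z
      · have h2 : ¬(z ∈ S ∧ y ∈ S ∧ z < y) := fun h2 => hz ⟨h1.2.1, h1.2.2, h2.2.2⟩
        rw [if_neg h2, mul_zero]
      · rw [if_neg h1, zero_mul]
  rw [hsum, Finset.sum_neg_distrib] at h4
  rw [inter_Ico_eq_insert hxy hx, Finset.sum_insert x_not_mem_inter_Ioo, posetChow_self]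
  linear_combination h4

noncomputable def matm (S : Finset P) : Matrix P P ℤ :=
  Matrix.of fun x y => if x ∈ S ∧ y ∈ S ∧ x < y then posetMu S x y else 0

noncomputable def matu (S : Finset P) : Matrix P P ℤ :=
  Matrix.of fun x y => if x ∈ S ∧ y ∈ S ∧ x < y then 1 else 0

lemma matmu (S : Finset P) : matm S + matu S + matm S * matu S = 0 := by
  ext x y
  simp only [Matrix.add_apply, Matrix.mul_apply, Matrix.zero_apply, matm, matu,
    Matrix.of_apply]
  by_cases hc : x ∈ S ∧ y ∈ S ∧ x < y
  · obtain ⟨hx, hy, hxy⟩ := hc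
    rw [if_pos ⟨hx, hy, hxy⟩, if_pos ⟨hx, hy, hxy⟩]
    have hsum : ∑ z : P, (if x ∈ S ∧ z ∈ S ∧ x < z then posetMu S x z else 0) *
        (if z ∈ S ∧ y ∈ S ∧ z < y then (1:ℤ) else 0)
        = ∑ z ∈ S ∩ Finset.Ioo x y, posetMu S x z := by
      rw [← Finset.sum_subset (Finset.subset_univ (S ∩ Finset.Ioo x y))]
      · refine Finset.sum_congr rfl fun z hz => ?_
        rw [Finset.mem_inter, Finset.mem_Ioo] at hz
        rw [if_pos ⟨hx, hz.1, hz.2.1⟩, if_pos ⟨hz.1, hy, hz.2.2⟩, mul_one]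
      · intro z _ hz
        rw [Finset.mem_inter, Finset.mem_Ioo] at hz
        by_cases h1 : x ∈ S ∧ z ∈ S ∧ x < z
        · have h2 : ¬(z ∈ S ∧ y ∈ S ∧ z < y) := fun h2 => hz ⟨h1.2.1, h1.2.2, h2.2.2⟩
          rw [if_neg h2, mul_zero]
        · rw [if_neg h1, zero_mul]
    rw [hsum]
    have hrec := posetMu_eq S hxy.ne
    rw [inter_Ico_eq_insert hxy hx, Finset.sum_insert x_not_mem_inter_Ioo,
      posetMu_self] at hrec
    rw [hrec]
    ring
  · rw [if_neg hc, if_neg hc]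
    have hz : ∀ z : P, (if x ∈ S ∧ z ∈ S ∧ x < z then posetMu S x z else 0) *
        (if z ∈ S ∧ y ∈ S ∧ z < y then (1:ℤ) else 0) = 0 := by
      intro z
      by_cases h1 : x ∈ S ∧ z ∈ S ∧ x < z
      · by_cases h2 : z ∈ S ∧ y ∈ S ∧ z < y
        · exact absurd ⟨h1.1, h2.2.1, h1.2.2.trans h2.2.2⟩ hc
        · rw [if_neg h2, mul_zero]
      · rw [if_neg h1, zero_mul]
    rw [Finset.sum_congr rfl fun z _ => hz z]
    simp

lemma mu_dual {S : Finset P} {x y : P} (hx : x ∈ S) (hy : y ∈ S) (hxy : x < y) :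
    ∑ z ∈ S ∩ Finset.Icc x y, posetMu S z y = 0 := by
  have h1 : (1 + matm S) * (1 + matu S) = 1 := by
    have e : (1 + matm S) * (1 + matu S) = 1 + (matm S + matu S + matm S * matu S) := by
      noncomm_ring
    rw [e, matmu, add_zero]
  have h2 : (1 + matu S) * (1 + matm S) = 1 := mul_eq_one_comm.mp h1
  have h3 : matu S + matm S + matu S * matm S = 0 := by
    have e : (1 + matu S) * (1 + matm S) = 1 + (matu S + matm S + matu S * matm S) := by
      noncomm_ring
    rw [e] at h2
    exact add_left_cancel (h2.trans (add_zero 1).symm)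
  have h4 : (matu S + matm S + matu S * matm S) x y = 0 := by rw [h3]; rfl
  simp only [Matrix.add_apply, Matrix.mul_apply, matm, matu, Matrix.of_apply] at h4
  rw [if_pos ⟨hx, hy, hxy⟩, if_pos ⟨hx, hy, hxy⟩] at h4
  have hsum : ∑ z : P, (if x ∈ S ∧ z ∈ S ∧ x < z then (1:ℤ) else 0) *
      (if z ∈ S ∧ y ∈ S ∧ z < y then posetMu S z y else 0)
      = ∑ z ∈ S ∩ Finset.Ioo x y, posetMu S z y := by
    rw [← Finset.sum_subset (Finset.subset_univ (S ∩ Finset.Ioo x y))]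
    · refine Finset.sum_congr rfl fun z hz => ?_
      rw [Finset.mem_inter, Finset.mem_Ioo] at hz
      rw [if_pos ⟨hx, hz.1, hz.2.1⟩, if_pos ⟨hz.1, hy, hz.2.2⟩, one_mul]
    · intro z _ hz
      rw [Finset.mem_inter, Finset.mem_Ioo] at hz
      by_cases h1 : x ∈ S ∧ z ∈ S ∧ x < z
      · have h2 : ¬(z ∈ S ∧ y ∈ S ∧ z < y) := fun h2 => hz ⟨h1.2.1, h1.2.2, h2.2.2⟩
        rw [if_neg h2, mul_zero]
      · rw [if_neg h1, zero_mul]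
  rw [hsum] at h4
  rw [inter_Icc_eq_insert hxy.le hy, inter_Ico_eq_insert hxy hx,
    Finset.sum_insert (by simp [Finset.mem_Ioo, hxy.ne']),
    Finset.sum_insert x_not_mem_inter_Ioo, posetMu_self]
  linear_combination h4

-- ### rank basics with bot

lemma bot_lt_of_rank [BoundedOrder P] {ρ : P → ℕ} (hρ : IsRankFn ρ) {y : P}
    (h : 1 ≤ ρ y) : ⊥ < y := by
  rcases eq_or_lt_of_le (bot_le : (⊥ : P) ≤ y) with hb | hb
  · exfalso; rw [← hb, hρ.1] at h; omega
  · exact hb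

-- ### the truncation lemma for chibar

lemma chibar_trunc [BoundedOrder P] {ρ : P → ℕ} (hρ : IsRankFn ρ) {y z : P}
    (hy2 : 2 ≤ ρ y) (hzy : z < y) (hz : ρ z ≠ ρ y - 1) :
    posetChibar (Finset.univ : Finset P) ρ z y =
      X * posetChibar ((Finset.Icc ⊥ y).filter (fun w => ρ w ≠ ρ y - 1))
            (fun w => min (ρ w) (ρ y - 1)) z y
        - C ((posetMu (Finset.univ : Finset P) z y : ℝ)) := by
  set S' : Finset P := (Finset.Icc ⊥ y).filter (fun w => ρ w ≠ ρ y - 1) with hS'def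
  set ρ' : P → ℕ := fun w => min (ρ w) (ρ y - 1) with hρ'def
  set A : Finset P := (Finset.Ico z y).filter (fun w => ρ w = ρ y - 1) with hAdef
  set B : Finset P := (Finset.Ico z y).filter (fun w => ¬ρ w = ρ y - 1) with hBdef
  have hrk : ∀ w : P, w < y → ρ w < ρ y := fun w hw => rank_strictMono hρ.2 hw
  have hBfacts : ∀ w ∈ B, z ≤ w ∧ w < y ∧ ρ w < ρ y - 1 := by
    intro w hw
    rw [hBdef, Finset.mem_filter, Finset.mem_Ico] at hw
    have := hrk w hw.1.2
    exact ⟨hw.1.1, hw.1.2, by omega⟩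
  have hB_mu : ∀ w ∈ B, posetMu S' z w = posetMu (Finset.univ : Finset P) z w := by
    intro w hw
    obtain ⟨hzw, hwy, hwr⟩ := hBfacts w hw
    refine posetMu_congr ?_
    rw [Finset.univ_inter]
    refine Finset.inter_eq_right.mpr (fun v hv => ?_)
    rw [Finset.mem_Icc] at hv
    have hvr : ρ v ≤ ρ w := rank_mono hρ.2 hv.2
    rw [hS'def, Finset.mem_filter, Finset.mem_Icc]
    exact ⟨⟨bot_le, hv.2.trans hwy.le⟩, by omega⟩
  have hS'Icc : S' ∩ Finset.Icc z y = insert y B := by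
    ext w
    rw [hS'def, hBdef, Finset.mem_inter, Finset.mem_filter, Finset.mem_Icc,
      Finset.mem_Icc, Finset.mem_insert, Finset.mem_filter, Finset.mem_Ico]
    constructor
    · rintro ⟨⟨_, hw2⟩, hzw, hwy⟩
      rcases eq_or_lt_of_le hwy with h | h
      · exact Or.inl h
      · exact Or.inr ⟨⟨hzw, h⟩, hw2⟩
    · rintro (h | ⟨⟨hzw, hwy⟩, hw2⟩)
      · subst h; exact ⟨⟨⟨bot_le, le_refl w⟩, by omega⟩, hzy.le, le_refl w⟩
      · exact ⟨⟨⟨bot_le, hwy.le⟩, hw2⟩, hzw, hwy.le⟩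
  have hS'Ico : S' ∩ Finset.Ico z y = B := by
    ext w
    rw [hS'def, hBdef, Finset.mem_inter, Finset.mem_filter, Finset.mem_Icc,
      Finset.mem_Ico, Finset.mem_filter, Finset.mem_Ico]
    constructor
    · rintro ⟨⟨_, hw2⟩, hzw, hwy⟩
      exact ⟨⟨hzw, hwy⟩, hw2⟩
    · rintro ⟨⟨hzw, hwy⟩, hw2⟩
      exact ⟨⟨⟨bot_le, hwy.le⟩, hw2⟩, hzw, hwy⟩
  have hynB : y ∉ B := by rw [hBdef]; simp [Finset.mem_Ico]
  have hμ'y : posetMu S' z y = -∑ w ∈ B, posetMu (Finset.univ : Finset P) z w := by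
    rw [posetMu_eq S' hzy.ne, hS'Ico]
    congr 1
    exact Finset.sum_congr rfl hB_mu
  have hμy : posetMu (Finset.univ : Finset P) z y
      = -(∑ w ∈ A, posetMu (Finset.univ : Finset P) z w)
        - ∑ w ∈ B, posetMu (Finset.univ : Finset P) z w := by
    rw [posetMu_eq (Finset.univ : Finset P) hzy.ne, Finset.univ_inter,
      ← Finset.sum_filter_add_sum_filter_not (Finset.Ico z y) (fun w => ρ w = ρ y - 1)]
    rw [← hAdef, ← hBdef]
    ring
  have hμrel : posetMu S' z y = posetMu (Finset.univ : Finset P) z y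
      + ∑ w ∈ A, posetMu (Finset.univ : Finset P) z w := by
    rw [hμ'y, hμy]; ring
  have hρ'y : ρ' y = ρ y - 1 := min_eq_right (by omega)
  have hρ'B : ∀ w ∈ B, ρ' w = ρ w := by
    intro w hw
    obtain ⟨_, hwy, hwr⟩ := hBfacts w hw
    have : ρ' w = min (ρ w) (ρ y - 1) := rfl
    rw [this]
    omega
  have hy_mem_S' : y ∈ S' := by
    rw [hS'def, Finset.mem_filter, Finset.mem_Icc]
    exact ⟨⟨bot_le, le_refl y⟩, by omega⟩
  have hchi' : posetChi S' ρ' z y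
      = C ((posetMu S' z y : ℝ))
        + ∑ w ∈ B, C ((posetMu (Finset.univ : Finset P) z w : ℝ)) * X ^ (ρ y - 1 - ρ w) := by
    unfold posetChi
    rw [hS'Icc, Finset.sum_insert hynB]
    congr 1
    · rw [hρ'y]; simp
    · refine Finset.sum_congr rfl fun w hw => ?_
      rw [hB_mu w hw, hρ'y, hρ'B w hw]
  have hchi : posetChi (Finset.univ : Finset P) ρ z y
      = C ((posetMu (Finset.univ : Finset P) z y : ℝ))
        + (∑ w ∈ A, C ((posetMu (Finset.univ : Finset P) z w : ℝ))) * X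
        + ∑ w ∈ B, C ((posetMu (Finset.univ : Finset P) z w : ℝ)) * X ^ (ρ y - ρ w) := by
    unfold posetChi
    rw [inter_Icc_eq_insert hzy.le (Finset.mem_univ y), Finset.univ_inter,
      Finset.sum_insert (by simp [Finset.mem_Ico]),
      ← Finset.sum_filter_add_sum_filter_not (Finset.Ico z y) (fun w => ρ w = ρ y - 1),
      ← hAdef, ← hBdef]
    have hA1 : ∑ w ∈ A, C ((posetMu (Finset.univ : Finset P) z w : ℝ)) * X ^ (ρ y - ρ w)
        = (∑ w ∈ A, C ((posetMu (Finset.univ : Finset P) z w : ℝ))) * X := by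
      rw [Finset.sum_mul]
      refine Finset.sum_congr rfl fun w hw => ?_
      rw [hAdef, Finset.mem_filter] at hw
      have : ρ y - ρ w = 1 := by omega
      rw [this, pow_one]
    rw [hA1]
    simp
    ring
  have hC : C ((posetMu S' z y : ℝ))
      = C ((posetMu (Finset.univ : Finset P) z y : ℝ))
        + ∑ w ∈ A, C ((posetMu (Finset.univ : Finset P) z w : ℝ)) := by
    rw [hμrel]
    push_cast
    rw [map_add, map_sum]
  have hXs1 : ∑ w ∈ B, C ((posetMu (Finset.univ : Finset P) z w : ℝ)) * X ^ (ρ y - ρ w)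
      = X * ∑ w ∈ B, C ((posetMu (Finset.univ : Finset P) z w : ℝ)) * X ^ (ρ y - 1 - ρ w) := by
    rw [Finset.mul_sum]
    refine Finset.sum_congr rfl fun w hw => ?_
    obtain ⟨_, _, hwr⟩ := hBfacts w hw
    have hexp : ρ y - ρ w = (ρ y - 1 - ρ w) + 1 := by omega
    rw [hexp, pow_succ]
    ring
  have hkey : X * posetChi S' ρ' z y
      = posetChi (Finset.univ : Finset P) ρ z y
        + (X - C 1) * C ((posetMu (Finset.univ : Finset P) z y : ℝ)) := by
    have hC1 : (C (1:ℝ) : Polynomial ℝ) = 1 := Polynomial.C_1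
    rw [hC1]
    linear_combination X * hchi' - hchi + X * hC - hXs1
  have h1 := posetChibar_mul ρ hzy (Finset.mem_univ y)
  have h2 := posetChibar_mul (S := S') ρ' hzy hy_mem_S'
  have hne : (X - C (1:ℝ)) ≠ 0 := Polynomial.X_sub_C_ne_zero 1
  apply mul_left_cancel₀ hne
  linear_combination h1 - X * h2 - hkey

-- ### coatom lemma

lemma chibar_covby {ρ : P → ℕ} (hρc : ∀ a b : P, a ⋖ b → ρ b = ρ a + 1)
    {z y : P} (h : z ⋖ y) : posetChibar (Finset.univ : Finset P) ρ z y = 1 := by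
  have hIco : (Finset.univ : Finset P) ∩ Finset.Ico z y = {z} := by
    rw [Finset.univ_inter]
    ext w
    rw [Finset.mem_Ico, Finset.mem_singleton]
    constructor
    · rintro ⟨hzw, hwy⟩
      rcases eq_or_lt_of_le hzw with h1 | h1
      · exact h1.symm
      · exact absurd hwy (h.2 h1)
    · rintro rfl
      exact ⟨le_refl w, h.lt⟩
  have hμ : posetMu (Finset.univ : Finset P) z y = -1 := by
    rw [posetMu_eq _ h.ne, hIco, Finset.sum_singleton, posetMu_self]
  have hIcc : (Finset.univ : Finset P) ∩ Finset.Icc z y = insert y {z} := by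
    rw [inter_Icc_eq_insert h.lt.le (Finset.mem_univ y), hIco]
  have hrk : ρ y - ρ z = 1 := by rw [hρc z y h]; omega
  have hchi : posetChi (Finset.univ : Finset P) ρ z y = X - C 1 := by
    unfold posetChi
    rw [hIcc, Finset.sum_insert (by simp [h.ne.symm]), Finset.sum_singleton,
      posetMu_self, hμ, hrk]
    simp
    ring
  rw [posetChibar, if_neg h.ne, hchi]
  have he : (X - C (1:ℝ)) = (X - C 1) * 1 := (mul_one _).symm
  nth_rewrite 1 [he]
  exact Polynomial.mul_divByMonic_cancel_left 1 (monic_X_sub_C 1)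

lemma mu_covby {z y : P} (h : z ⋖ y) : posetMu (Finset.univ : Finset P) z y = -1 := by
  have hIco : (Finset.univ : Finset P) ∩ Finset.Ico z y = {z} := by
    rw [Finset.univ_inter]
    ext w
    rw [Finset.mem_Ico, Finset.mem_singleton]
    constructor
    · rintro ⟨hzw, hwy⟩
      rcases eq_or_lt_of_le hzw with h1 | h1
      · exact h1.symm
      · exact absurd hwy (h.2 h1)
    · rintro rfl
      exact ⟨le_refl w, h.lt⟩
  rw [posetMu_eq _ h.ne, hIco, Finset.sum_singleton, posetMu_self]

lemma chow_loc [BoundedOrder P] {ρ : P → ℕ} (hρ : IsRankFn ρ) {y z : P}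
    (hzy : z < y) (hz : ρ z ≠ ρ y - 1) :
    posetChow ((Finset.Icc ⊥ y).filter (fun w => ρ w ≠ ρ y - 1))
        (fun w => min (ρ w) (ρ y - 1)) ⊥ z
      = posetChow (Finset.univ : Finset P) ρ ⊥ z := by
  have hzr : ρ z < ρ y - 1 := by have := rank_strictMono hρ.2 hzy; omega
  refine posetChow_congr ?_ ?_
  · rw [Finset.univ_inter]
    refine Finset.inter_eq_right.mpr fun v hv => ?_
    rw [Finset.mem_Icc] at hv
    have : ρ v ≤ ρ z := rank_mono hρ.2 hv.2
    rw [Finset.mem_filter, Finset.mem_Icc]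
    exact ⟨⟨bot_le, hv.2.trans hzy.le⟩, by omega⟩
  · intro w hw
    rw [Finset.mem_Icc] at hw
    have : ρ w ≤ ρ z := rank_mono hρ.2 hw.2
    exact min_eq_left (by omega)

lemma mu_sum_Ico_negone {x y : P} (hxy : x < y) :
    ∑ z ∈ Finset.Ico x y, posetMu (Finset.univ : Finset P) z y = -1 := by
  have h := mu_dual (Finset.mem_univ x) (Finset.mem_univ y) hxy
  rw [inter_Icc_eq_insert hxy.le (Finset.mem_univ y), Finset.univ_inter,
    Finset.sum_insert (by simp [Finset.mem_Ico]), posetMu_self] at h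
  omega

theorem chow_T [BoundedOrder P] (ρ : P → ℕ) (hρ : IsRankFn ρ) :
    ∀ (n : ℕ) (y : P), ρ y ≤ n →
    posetChow (Finset.univ : Finset P) ρ ⊥ y =
      1 + X * ∑ x ∈ (Finset.Icc ⊥ y).filter (fun x : P => 2 ≤ ρ x),
        posetChow ((Finset.Icc ⊥ x).filter (fun z => ρ z ≠ ρ x - 1))
          (fun z => min (ρ z) (ρ x - 1)) ⊥ x := by
  have hbot : ∀ y : P, ρ y = 0 → y = ⊥ := by
    intro y h0
    rcases eq_or_lt_of_le (bot_le : (⊥:P) ≤ y) with hb | hb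
    · exact hb.symm
    · have := rank_strictMono hρ.2 hb
      rw [hρ.1] at this
      omega
  have hbotcase : posetChow (Finset.univ : Finset P) ρ ⊥ (⊥:P) =
      1 + X * ∑ x ∈ (Finset.Icc (⊥:P) ⊥).filter (fun x : P => 2 ≤ ρ x),
        posetChow ((Finset.Icc ⊥ x).filter (fun z => ρ z ≠ ρ x - 1))
          (fun z => min (ρ z) (ρ x - 1)) ⊥ x := by
    rw [posetChow_self]
    have hfil : (Finset.Icc (⊥:P) ⊥).filter (fun x : P => 2 ≤ ρ x) = ∅ := by
      refine Finset.filter_eq_empty_iff.mpr fun {x} hx => ?_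
      rw [Finset.Icc_self, Finset.mem_singleton] at hx
      subst hx
      rw [hρ.1]
      omega
    rw [hfil, Finset.sum_empty, mul_zero, add_zero]
  intro n
  induction n with
  | zero =>
    intro y hy
    have := hbot y (by omega)
    subst this
    exact hbotcase
  | succ n ih =>
    intro y hy
    by_cases h0 : ρ y = 0
    · have := hbot y h0; subst this; exact hbotcase
    by_cases h1 : ρ y = 1
    · -- rank one case
      have hby : ⊥ < y := bot_lt_of_rank hρ (by omega)
      have hcov : (⊥:P) ⋖ y := covby_of_rank hρ.2 hby (by rw [hρ.1]; omega)
      rw [chow_right ρ (Finset.mem_univ ⊥) (Finset.mem_univ y) hby, Finset.univ_inter]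
      have hIco : Finset.Ico (⊥:P) y = {⊥} := by
        ext w
        rw [Finset.mem_Ico, Finset.mem_singleton]
        constructor
        · rintro ⟨_, hwy⟩
          rcases eq_or_lt_of_le (bot_le : (⊥:P) ≤ w) with hb | hb
          · exact hb.symm
          · exact absurd hwy (hcov.2 hb)
        · rintro rfl
          exact ⟨le_refl _, hby⟩
      rw [hIco, Finset.sum_singleton, posetChow_self, one_mul, chibar_covby hρ.2 hcov]
      have hfil : (Finset.Icc (⊥:P) y).filter (fun x : P => 2 ≤ ρ x) = ∅ := by
        refine Finset.filter_eq_empty_iff.mpr fun {x} hx => ?_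
        rw [Finset.mem_Icc] at hx
        have := rank_mono hρ.2 hx.2
        omega
      rw [hfil, Finset.sum_empty, mul_zero, add_zero]
    · -- main case : 2 ≤ ρ y
      have hy2 : 2 ≤ ρ y := by omega
      have hby : ⊥ < y := bot_lt_of_rank hρ (by omega)
      set Hτ : P → Polynomial ℝ := fun x =>
        posetChow ((Finset.Icc ⊥ x).filter (fun z => ρ z ≠ ρ x - 1))
          (fun z => min (ρ z) (ρ x - 1)) ⊥ x with hHτ
      set A : Finset P := (Finset.Ico (⊥:P) y).filter (fun w => ρ w = ρ y - 1) with hA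
      set B : Finset P := (Finset.Ico (⊥:P) y).filter (fun w => ¬ρ w = ρ y - 1) with hB
      have hrec : posetChow (Finset.univ : Finset P) ρ ⊥ y
          = ∑ z ∈ Finset.Ico (⊥:P) y,
              posetChow (Finset.univ : Finset P) ρ ⊥ z
                * posetChibar (Finset.univ : Finset P) ρ z y := by
        rw [chow_right ρ (Finset.mem_univ ⊥) (Finset.mem_univ y) hby, Finset.univ_inter]
      -- A part : coatoms
      have hcovA : ∀ z ∈ A, z ⋖ y := by
        intro z hz
        rw [hA, Finset.mem_filter, Finset.mem_Ico] at hz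
        exact covby_of_rank hρ.2 hz.1.2 (by omega)
      have hApart : ∀ z ∈ A,
          posetChow (Finset.univ : Finset P) ρ ⊥ z
            * posetChibar (Finset.univ : Finset P) ρ z y
          = -(posetChow (Finset.univ : Finset P) ρ ⊥ z
              * C ((posetMu (Finset.univ : Finset P) z y : ℝ))) := by
        intro z hz
        rw [chibar_covby hρ.2 (hcovA z hz), mu_covby (hcovA z hz)]
        push_cast
        rw [map_neg, map_one]
        ring
      have hBz : ∀ z ∈ B, z < y ∧ ρ z ≠ ρ y - 1 := by
        intro z hz
        rw [hB, Finset.mem_filter, Finset.mem_Ico] at hz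
        exact ⟨hz.1.2, hz.2⟩
      have hBpart : ∀ z ∈ B,
          posetChow (Finset.univ : Finset P) ρ ⊥ z
            * posetChibar (Finset.univ : Finset P) ρ z y
          = X * (posetChow (Finset.univ : Finset P) ρ ⊥ z
                * posetChibar ((Finset.Icc ⊥ y).filter (fun w => ρ w ≠ ρ y - 1))
                    (fun w => min (ρ w) (ρ y - 1)) z y)
            - posetChow (Finset.univ : Finset P) ρ ⊥ z
                * C ((posetMu (Finset.univ : Finset P) z y : ℝ)) := by
        intro z hz
        rw [chibar_trunc hρ hy2 (hBz z hz).1 (hBz z hz).2]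
        ring
      -- the truncated Chow polynomial via its right recursion
      have hbotS' : (⊥:P) ∈ (Finset.Icc (⊥:P) y).filter (fun w => ρ w ≠ ρ y - 1) := by
        rw [Finset.mem_filter, Finset.mem_Icc]
        exact ⟨⟨le_refl _, bot_le⟩, by rw [hρ.1]; omega⟩
      have hyS' : y ∈ (Finset.Icc (⊥:P) y).filter (fun w => ρ w ≠ ρ y - 1) := by
        rw [Finset.mem_filter, Finset.mem_Icc]
        exact ⟨⟨bot_le, le_refl y⟩, by omega⟩
      have hS'Ico : ((Finset.Icc (⊥:P) y).filter (fun w => ρ w ≠ ρ y - 1))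
          ∩ Finset.Ico (⊥:P) y = B := by
        ext w
        rw [hB, Finset.mem_inter, Finset.mem_filter, Finset.mem_Icc, Finset.mem_Ico,
          Finset.mem_filter, Finset.mem_Ico]
        constructor
        · rintro ⟨⟨_, hw2⟩, hw3⟩
          exact ⟨hw3, hw2⟩
        · rintro ⟨hw3, hw2⟩
          exact ⟨⟨⟨bot_le, hw3.2.le⟩, hw2⟩, hw3⟩
      have hτ : ∑ z ∈ B, posetChow (Finset.univ : Finset P) ρ ⊥ z
            * posetChibar ((Finset.Icc ⊥ y).filter (fun w => ρ w ≠ ρ y - 1))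
                (fun w => min (ρ w) (ρ y - 1)) z y
          = Hτ y := by
        have h := chow_right (S := (Finset.Icc (⊥:P) y).filter (fun w => ρ w ≠ ρ y - 1))
          (fun w => min (ρ w) (ρ y - 1)) hbotS' hyS' hby
        rw [hS'Ico] at h
        simp only [hHτ]
        rw [h]
        refine Finset.sum_congr rfl fun z hz => ?_
        rw [chow_loc hρ (hBz z hz).1 (hBz z hz).2]
      -- induction hypothesis applied below y
      have hIH : ∀ z ∈ Finset.Ico (⊥:P) y,
          posetChow (Finset.univ : Finset P) ρ ⊥ z
            = 1 + X * ∑ x ∈ (Finset.Icc ⊥ z).filter (fun x : P => 2 ≤ ρ x), Hτ x := by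
        intro z hz
        rw [Finset.mem_Ico] at hz
        have := rank_strictMono hρ.2 hz.2
        exact ih z (by omega)
      have hM : ∑ z ∈ Finset.Ico (⊥:P) y, posetChow (Finset.univ : Finset P) ρ ⊥ z
              * C ((posetMu (Finset.univ : Finset P) z y : ℝ))
          = ∑ z ∈ Finset.Ico (⊥:P) y, C ((posetMu (Finset.univ : Finset P) z y : ℝ))
            + X * ∑ z ∈ Finset.Ico (⊥:P) y,
                (∑ x ∈ (Finset.Icc ⊥ z).filter (fun x : P => 2 ≤ ρ x), Hτ x)
                  * C ((posetMu (Finset.univ : Finset P) z y : ℝ)) := by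
        rw [Finset.mul_sum, ← Finset.sum_add_distrib]
        refine Finset.sum_congr rfl fun z hz => ?_
        rw [hIH z hz]
        ring
      have hsum1 : ∑ z ∈ Finset.Ico (⊥:P) y,
          C ((posetMu (Finset.univ : Finset P) z y : ℝ)) = -1 := by
        rw [← map_sum]
        have hc : ∑ z ∈ Finset.Ico (⊥:P) y, ((posetMu (Finset.univ : Finset P) z y : ℝ))
            = ((∑ z ∈ Finset.Ico (⊥:P) y, posetMu (Finset.univ : Finset P) z y : ℤ) : ℝ) := by
          push_cast
          rfl
        rw [hc, mu_sum_Ico_negone hby]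
        simp
      have hswap : ∑ z ∈ Finset.Ico (⊥:P) y,
            (∑ x ∈ (Finset.Icc ⊥ z).filter (fun x : P => 2 ≤ ρ x), Hτ x)
              * C ((posetMu (Finset.univ : Finset P) z y : ℝ))
          = -∑ x ∈ (Finset.Ico (⊥:P) y).filter (fun x : P => 2 ≤ ρ x), Hτ x := by
        calc ∑ z ∈ Finset.Ico (⊥:P) y,
              (∑ x ∈ (Finset.Icc ⊥ z).filter (fun x : P => 2 ≤ ρ x), Hτ x)
                * C ((posetMu (Finset.univ : Finset P) z y : ℝ))
            = ∑ z ∈ Finset.Ico (⊥:P) y,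
                ∑ x ∈ (Finset.Icc ⊥ z).filter (fun x : P => 2 ≤ ρ x),
                  Hτ x * C ((posetMu (Finset.univ : Finset P) z y : ℝ)) := by
              exact Finset.sum_congr rfl fun z _ => Finset.sum_mul _ _ _
          _ = ∑ x ∈ (Finset.Ico (⊥:P) y).filter (fun x : P => 2 ≤ ρ x),
                ∑ z ∈ Finset.Ico x y,
                  Hτ x * C ((posetMu (Finset.univ : Finset P) z y : ℝ)) := by
              refine Finset.sum_comm' ?_
              intro z x
              simp only [Finset.mem_Ico, Finset.mem_Icc, Finset.mem_filter]
              constructor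
              · rintro ⟨⟨_, hzy⟩, ⟨⟨_, hxz⟩, h2⟩⟩
                exact ⟨⟨hxz, hzy⟩, ⟨⟨bot_le, lt_of_le_of_lt hxz hzy⟩, h2⟩⟩
              · rintro ⟨⟨hxz, hzy⟩, ⟨⟨_, _⟩, h2⟩⟩
                exact ⟨⟨bot_le, hzy⟩, ⟨⟨bot_le, hxz⟩, h2⟩⟩
          _ = ∑ x ∈ (Finset.Ico (⊥:P) y).filter (fun x : P => 2 ≤ ρ x), Hτ x * (-1) := by
              refine Finset.sum_congr rfl fun x hx => ?_
              have hxy : x < y := by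
                rw [Finset.mem_filter, Finset.mem_Ico] at hx
                exact hx.1.2
              rw [← Finset.mul_sum]
              congr 1
              rw [← map_sum]
              have hc : ∑ z ∈ Finset.Ico x y, ((posetMu (Finset.univ : Finset P) z y : ℝ))
                  = ((∑ z ∈ Finset.Ico x y, posetMu (Finset.univ : Finset P) z y : ℤ) : ℝ) := by
                push_cast
                rfl
              rw [hc, mu_sum_Ico_negone hxy]
              simp
          _ = -∑ x ∈ (Finset.Ico (⊥:P) y).filter (fun x : P => 2 ≤ ρ x), Hτ x := by
              simp [mul_neg_one]
      have hins : (Finset.Icc (⊥:P) y).filter (fun x : P => 2 ≤ ρ x)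
          = insert y ((Finset.Ico (⊥:P) y).filter (fun x : P => 2 ≤ ρ x)) := by
        ext w
        rw [Finset.mem_filter, Finset.mem_Icc, Finset.mem_insert, Finset.mem_filter,
          Finset.mem_Ico]
        constructor
        · rintro ⟨⟨_, hwy⟩, h2⟩
          rcases eq_or_lt_of_le hwy with h | h
          · exact Or.inl h
          · exact Or.inr ⟨⟨bot_le, h⟩, h2⟩
        · rintro (rfl | ⟨⟨_, hwy⟩, h2⟩)
          · exact ⟨⟨bot_le, le_refl w⟩, hy2⟩
          · exact ⟨⟨bot_le, hwy.le⟩, h2⟩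
      have hnm : y ∉ (Finset.Ico (⊥:P) y).filter (fun x : P => 2 ≤ ρ x) := by
        simp [Finset.mem_Ico]
      -- assemble everything
      calc posetChow (Finset.univ : Finset P) ρ ⊥ y
          = ∑ z ∈ A, posetChow (Finset.univ : Finset P) ρ ⊥ z
                * posetChibar (Finset.univ : Finset P) ρ z y
            + ∑ z ∈ B, posetChow (Finset.univ : Finset P) ρ ⊥ z
                * posetChibar (Finset.univ : Finset P) ρ z y := by
            rw [hrec, ← Finset.sum_filter_add_sum_filter_not (Finset.Ico (⊥:P) y)
              (fun w => ρ w = ρ y - 1)]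
        _ = (-∑ z ∈ A, posetChow (Finset.univ : Finset P) ρ ⊥ z
                * C ((posetMu (Finset.univ : Finset P) z y : ℝ)))
            + (X * ∑ z ∈ B, posetChow (Finset.univ : Finset P) ρ ⊥ z
                  * posetChibar ((Finset.Icc ⊥ y).filter (fun w => ρ w ≠ ρ y - 1))
                      (fun w => min (ρ w) (ρ y - 1)) z y
               - ∑ z ∈ B, posetChow (Finset.univ : Finset P) ρ ⊥ z
                   * C ((posetMu (Finset.univ : Finset P) z y : ℝ))) := by
            rw [Finset.sum_congr rfl hApart, Finset.sum_congr rfl hBpart,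
              Finset.sum_neg_distrib, Finset.sum_sub_distrib, Finset.mul_sum]
        _ = X * Hτ y
            - (∑ z ∈ A, posetChow (Finset.univ : Finset P) ρ ⊥ z
                  * C ((posetMu (Finset.univ : Finset P) z y : ℝ))
               + ∑ z ∈ B, posetChow (Finset.univ : Finset P) ρ ⊥ z
                  * C ((posetMu (Finset.univ : Finset P) z y : ℝ))) := by
            rw [hτ]
            ring
        _ = X * Hτ y
            - ∑ z ∈ Finset.Ico (⊥:P) y, posetChow (Finset.univ : Finset P) ρ ⊥ z
                * C ((posetMu (Finset.univ : Finset P) z y : ℝ)) := by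
            rw [hA, hB, Finset.sum_filter_add_sum_filter_not]
        _ = X * Hτ y - (-1 + X *
              (-∑ x ∈ (Finset.Ico (⊥:P) y).filter (fun x : P => 2 ≤ ρ x), Hτ x)) := by
            rw [hM, hsum1, hswap]
        _ = 1 + X * (Hτ y
              + ∑ x ∈ (Finset.Ico (⊥:P) y).filter (fun x : P => 2 ≤ ρ x), Hτ x) := by
            ring
        _ = 1 + X * ∑ x ∈ (Finset.Icc (⊥:P) y).filter (fun x : P => 2 ≤ ρ x), Hτ x := by
            rw [hins, Finset.sum_insert hnm]

/-- Truncation formula: for a finite bounded graded poset `P`,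
`H_P(t) = 1 + t · ∑_{ρ(x) ≥ 2} H_{τ([0̂,x])}(t)`, where `τ([0̂,x])` is the
interval `[0̂,x]` with its coatoms (elements of rank `ρ(x) - 1`) removed,
graded by the truncated rank function. -/
theorem chow_truncation_formula
    {P : Type*} [PartialOrder P] [Fintype P] [BoundedOrder P]
    (ρ : P → ℕ) (hρ : IsRankFn ρ) :
    posetChow (Finset.univ : Finset P) ρ ⊥ ⊤ =
      1 + X * ∑ x ∈ Finset.univ.filter (fun x : P => 2 ≤ ρ x),
        posetChow ((Finset.Icc ⊥ x).filter (fun z => ρ z ≠ ρ x - 1))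
          (fun z => min (ρ z) (ρ x - 1)) ⊥ x := by
  have h := chow_T ρ hρ (ρ ⊤) ⊤ le_rfl
  have hIcc : Finset.Icc (⊥:P) ⊤ = Finset.univ := by
    ext w
    simp [Finset.mem_Icc]
  rw [h, hIcc]
end
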